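/- arXiv:math/0510676 — 3 statements merged into one kernel-verified Lean document; each statement's English description precedes it below -/
import Mathlib

section
/- Let F be a Ferrers shape whose right/up boundary from top-left to bottom-right is encoded by the word w = w_1 w_2 ... w_k in the letters D (down) and R (right). The 0-1-fillings of F with at most one 1 in each row and each column are in bijection with sequences (∅ = λ^0, λ^1, ..., λ^k = ∅) of integer partitions such that consecutive partitions differ by at most one square, λ^{i-1} ⊆ λ^i whenever w_i = R, and λ^{i-1} ⊇ λ^i whenever w_i = D. -/
/-!
Fomin's growth diagrams. Given a filling `f`, label the lattice point `(a, b)` by the partition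
`grow f a b`, starting from `∅` on the left and bottom edges and applying the forward local rule
cell by cell. If `f` has at most one nonzero entry in each row and column, then `grow f a b` has
as many cells as there are nonzero entries below and left of `(a, b)`, consecutive labels differ by
at most one cell, and the labels along the boundary path of `F` form an oscillating tableau.
Conversely, the backward local rule inverts the forward one on each cell, recovering both the
lower-left label and the entry. Starting from an oscillating tableau on the boundary and
applying it cell by cell towards the origin therefore rebuilds a growth diagram and a filling,
and the two constructions are mutually inverse.
-/

/-- `f` is a 0-1-filling of the Ferrers shape `F`. -/
def Filling01 (F : YoungDiagram) (f : ℕ × ℕ → ℕ) : Prop :=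
  ∀ c, f c ≠ 0 → c ∈ F ∧ f c = 1

/-- The filling `f` has at most one `1` in each row and in each column. -/
def AtMostOnePerRowCol (f : ℕ × ℕ → ℕ) : Prop :=
  ∀ c d, f c ≠ 0 → f d ≠ 0 → c ≠ d → c.1 ≠ d.1 ∧ c.2 ≠ d.2

/-- `ν` is obtained from `μ` by adding at most one square. -/
def AddBoxLE (μ ν : YoungDiagram) : Prop :=
  μ ≤ ν ∧ ν.card ≤ μ.card + 1

/-- The boundary word `w : Fin k → Bool` (with `true` = R, a right-step, and
`false` = D, a down-step, read from top-left to bottom-right) encodes the Ferrers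
shape `F`: the number of R's is the width of `F`, the number of D's is the height
of `F`, and the number of D's after the `x`-th R equals the length of the `x`-th
column of `F` (columns indexed from `0`, so the `x`-th R is the one after which
`RUpTo = x + 1`). -/
def Encodes (F : YoungDiagram) {k : ℕ} (w : Fin k → Bool) : Prop :=
  (Finset.univ.filter (fun j : Fin k => w j = true)).card = F.rowLen 0 ∧
  (Finset.univ.filter (fun j : Fin k => w j = false)).card = F.colLen 0 ∧
  ∀ i : Fin k, w i = true →
    F.colLen ((Finset.univ.filter (fun j : Fin k => j ≤ i ∧ w j = true)).card - 1) =
      (Finset.univ.filter (fun j : Fin k => i < j ∧ w j = false)).card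

/-! ### Adding and removing cells -/

namespace YoungDiagram

instance : DecidableEq YoungDiagram := fun _ _ => decidable_of_iff _ YoungDiagram.ext_iff.symm

lemma eq_of_le_of_card_le {μ ν : YoungDiagram} (h : μ ≤ ν) (hc : ν.card ≤ μ.card) : μ = ν :=
  YoungDiagram.ext (Finset.eq_of_subset_of_card_le (cells_subset_iff.2 h) hc)

lemma card_lt_card {μ ν : YoungDiagram} (h : μ < ν) : μ.card < ν.card :=
  Finset.card_lt_card (cells_ssubset_iff.2 h)

lemma card_sup_add_card_inf (μ ν : YoungDiagram) :
    (μ ⊔ ν).card + (μ ⊓ ν).card = μ.card + ν.card := by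
  simp only [YoungDiagram.card, cells_sup, cells_inf, Finset.card_union_add_card_inter]

@[simp] lemma card_bot : (⊥ : YoungDiagram).card = 0 := by
  simp [YoungDiagram.card, cells_bot]

lemma lt_rowLen_zero_of_lt_colLen {μ : YoungDiagram} {a b : ℕ} (h : b < μ.colLen a) :
    a < μ.rowLen 0 :=
  mem_iff_lt_rowLen.1 (μ.up_left_mem (Nat.zero_le b) le_rfl (mem_iff_lt_colLen.2 h))

lemma colLen_rowLen_zero (μ : YoungDiagram) : μ.colLen (μ.rowLen 0) = 0 := by
  by_contra h
  exact lt_irrefl _ (mem_iff_lt_rowLen.1 (mem_iff_lt_colLen.2 (Nat.pos_of_ne_zero h)))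

lemma rowLen_eq_of_forall_mem_iff {μ : YoungDiagram} {i n : ℕ} (h : ∀ j, (i, j) ∈ μ ↔ j < n) :
    μ.rowLen i = n := by
  refine le_antisymm (not_lt.1 fun hn => ?_) (not_lt.1 fun hn => ?_)
  · exact lt_irrefl n ((h n).1 (mem_iff_lt_rowLen.2 hn))
  · exact lt_irrefl _ (mem_iff_lt_rowLen.1 ((h _).2 hn))

def principal (c : ℕ × ℕ) : YoungDiagram where
  cells := Finset.Iic c
  isLowerSet := by simpa using isLowerSet_Iic c

/-- Adds exactly the cell `(r, μ.rowLen r)` when row `r` is addable (`cells_addToRow`). -/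
def addToRow (μ : YoungDiagram) (r : ℕ) : YoungDiagram :=
  μ ⊔ principal (r, μ.rowLen r)

/-- Removes exactly the last cell of row `r` when `μ.rowLen (r + 1) < μ.rowLen r`
(`cells_removeFromRow`). -/
def removeFromRow (μ : YoungDiagram) (r : ℕ) : YoungDiagram where
  cells := μ.cells.filter fun x => ¬ (r, μ.rowLen r - 1) ≤ x
  isLowerSet := by
    intro x y hyx hx
    simp only [Finset.coe_filter, Set.mem_ofPred_eq, mem_cells] at hx ⊢
    exact ⟨μ.isLowerSet hyx hx.1, fun h => hx.2 (h.trans hyx)⟩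

def IsAddableRow (μ : YoungDiagram) (r : ℕ) : Prop :=
  r = 0 ∨ μ.rowLen r < μ.rowLen (r - 1)

lemma rowEnd_notMem (μ : YoungDiagram) (r : ℕ) : (r, μ.rowLen r) ∉ μ := by
  simp [mem_iff_lt_rowLen]

lemma cells_addToRow {μ : YoungDiagram} {r : ℕ} (hr : μ.IsAddableRow r) :
    (μ.addToRow r).cells = insert (r, μ.rowLen r) μ.cells := by
  ext ⟨i, j⟩
  simp only [addToRow, principal, cells_sup, Finset.mem_union, Finset.mem_Iic, Finset.mem_insert,
    mem_cells, mem_iff_lt_rowLen, Prod.mk_le_mk, Prod.mk.injEq]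
  constructor
  · rintro (h | ⟨hi, hj⟩)
    · exact .inr h
    · rcases hi.lt_or_eq with hi | rfl
      · have hr' : μ.rowLen r < μ.rowLen (r - 1) := hr.resolve_left (by omega)
        exact .inr (lt_of_le_of_lt hj (hr'.trans_le (μ.rowLen_anti _ _ (by omega))))
      · rcases hj.lt_or_eq with hj | rfl
        · exact .inr hj
        · exact .inl ⟨rfl, rfl⟩
  · rintro (⟨rfl, rfl⟩ | h)
    · exact .inr ⟨le_rfl, le_rfl⟩
    · exact .inl h

lemma card_addToRow {μ : YoungDiagram} {r : ℕ} (hr : μ.IsAddableRow r) :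
    (μ.addToRow r).card = μ.card + 1 := by
  simp only [YoungDiagram.card, cells_addToRow hr,
    Finset.card_insert_of_notMem ((mem_cells _).not.2 (rowEnd_notMem μ r))]

lemma addToRow_ne {μ : YoungDiagram} {r : ℕ} (hr : μ.IsAddableRow r) : μ.addToRow r ≠ μ :=
  fun h => by have := card_addToRow hr; rw [h] at this; omega

lemma cells_removeFromRow {μ : YoungDiagram} {r : ℕ} (h : μ.rowLen (r + 1) < μ.rowLen r) :
    (μ.removeFromRow r).cells = μ.cells.erase (r, μ.rowLen r - 1) := by
  ext ⟨i, j⟩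
  simp only [removeFromRow, Finset.mem_filter, Finset.mem_erase, mem_cells, mem_iff_lt_rowLen,
    Prod.mk_le_mk, ne_eq, Prod.mk.injEq]
  constructor
  · rintro ⟨hj, hc⟩
    exact ⟨fun ⟨hi, hj'⟩ => hc ⟨hi.ge, hj'.ge⟩, hj⟩
  · rintro ⟨hc, hj⟩
    refine ⟨hj, fun ⟨hi, hj'⟩ => hc ⟨?_, ?_⟩⟩
    · have := μ.rowLen_anti r i hi
      have : ¬ r + 1 ≤ i := fun h' => by have := μ.rowLen_anti _ _ h'; omega
      omega
    · have := μ.rowLen_anti r i hi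
      omega

/-- The row of the cell added to `μ` when `ν` covers `μ`. -/
def newRow (μ ν : YoungDiagram) : ℕ :=
  (ν.cells \ μ.cells).sup Prod.fst

lemma newRow_of_cells_eq_insert {μ ν : YoungDiagram} {c : ℕ × ℕ} (hc : c ∉ μ)
    (h : ν.cells = insert c μ.cells) : newRow μ ν = c.1 := by
  rw [newRow, h, Finset.insert_sdiff_of_notMem _ (by simpa using hc), Finset.sdiff_self,
    insert_empty_eq, Finset.sup_singleton]

lemma newRow_addToRow {μ : YoungDiagram} {r : ℕ} (hr : μ.IsAddableRow r) :
    newRow μ (μ.addToRow r) = r :=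
  newRow_of_cells_eq_insert (rowEnd_notMem μ r) (cells_addToRow hr)

lemma cells_eq_insert_removeFromRow {μ : YoungDiagram} {r : ℕ}
    (h : μ.rowLen (r + 1) < μ.rowLen r) :
    μ.cells = insert (r, μ.rowLen r - 1) (μ.removeFromRow r).cells ∧
      (r, μ.rowLen r - 1) ∉ μ.removeFromRow r := by
  have hmem : (r, μ.rowLen r - 1) ∈ μ.cells := by
    simpa [mem_iff_lt_rowLen] using (Nat.zero_le _).trans_lt h
  rw [cells_removeFromRow h, Finset.insert_erase hmem, ← mem_cells, cells_removeFromRow h]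
  exact ⟨rfl, Finset.notMem_erase _ _⟩

lemma newRow_removeFromRow {μ : YoungDiagram} {r : ℕ} (h : μ.rowLen (r + 1) < μ.rowLen r) :
    newRow (μ.removeFromRow r) μ = r :=
  newRow_of_cells_eq_insert (cells_eq_insert_removeFromRow h).2
    (cells_eq_insert_removeFromRow h).1

lemma card_removeFromRow {μ : YoungDiagram} {r : ℕ} (h : μ.rowLen (r + 1) < μ.rowLen r) :
    μ.card = (μ.removeFromRow r).card + 1 := by
  obtain ⟨hcells, hnotMem⟩ := cells_eq_insert_removeFromRow h
  simp only [YoungDiagram.card, hcells,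
    Finset.card_insert_of_notMem ((mem_cells _).not.2 hnotMem)]

lemma removeFromRow_ne {μ : YoungDiagram} {r : ℕ} (h : μ.rowLen (r + 1) < μ.rowLen r) :
    μ.removeFromRow r ≠ μ :=
  fun h' => by have := card_removeFromRow h; rw [h'] at this; omega

lemma cells_eq_insert_of_card_eq {μ ν : YoungDiagram} (hle : μ ≤ ν)
    (hc : ν.card = μ.card + 1) :
    μ.IsAddableRow (newRow μ ν) ∧
      ν.cells = insert (newRow μ ν, μ.rowLen (newRow μ ν)) μ.cells := by
  have hsub : μ.cells ⊆ ν.cells := cells_subset_iff.2 hle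
  obtain ⟨⟨r, j⟩, hrj⟩ : ∃ c, ν.cells \ μ.cells = {c} := by
    rw [← Finset.card_eq_one, Finset.card_sdiff_of_subset hsub]
    simp only [YoungDiagram.card] at hc
    omega
  have hmem : ∀ x, x ∈ ν ↔ x = (r, j) ∨ x ∈ μ := fun x => by
    have := congrArg (x ∈ ·) hrj
    simp only [Finset.mem_sdiff, mem_cells, Finset.mem_singleton, eq_iff_iff] at this
    by_cases hx : x ∈ μ
    · simp [hx, hle hx]
    · simp_all
  have hcells : ν.cells = insert (r, j) μ.cells := by
    ext x; simp [hmem]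
  have hrj_notMem : (r, j) ∉ μ := by
    have := Finset.mem_singleton_self (r, j); rw [← hrj, Finset.mem_sdiff] at this
    simpa using this.2
  have hν : (r, j) ∈ ν := (hmem _).2 (.inl rfl)
  rw [newRow_of_cells_eq_insert hrj_notMem hcells]
  have hj : j = μ.rowLen r := by
    rw [mem_iff_lt_rowLen, not_lt] at hrj_notMem
    rcases hrj_notMem.lt_or_eq with hlt | heq
    · have := (hmem _).1 (ν.up_left_mem le_rfl hlt.le hν)
      simp only [Prod.mk.injEq, mem_iff_lt_rowLen] at this
      omega
    · exact heq.symm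
  subst hj
  refine ⟨?_, hcells⟩
  dsimp only
  rcases Nat.eq_zero_or_pos r with hr | hr
  · exact .inl hr
  · have := (hmem _).1 (ν.up_left_mem (Nat.sub_le r 1) le_rfl hν)
    simp only [Prod.mk.injEq, mem_iff_lt_rowLen] at this
    exact .inr (by omega)

lemma rowLen_of_cells_eq_insert {μ ν : YoungDiagram} {r : ℕ}
    (h : ν.cells = insert (r, μ.rowLen r) μ.cells) (i : ℕ) :
    ν.rowLen i = if i = r then μ.rowLen r + 1 else μ.rowLen i := by
  apply rowLen_eq_of_forall_mem_iff
  intro j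
  rw [← mem_cells, h, Finset.mem_insert, mem_cells, mem_iff_lt_rowLen, Prod.mk.injEq]
  split_ifs with hi
  · subst hi; omega
  · simp [hi]

lemma removeFromRow_of_cells_eq_insert {μ ν : YoungDiagram} {r : ℕ}
    (h : ν.cells = insert (r, μ.rowLen r) μ.cells) : ν.removeFromRow r = μ := by
  have hr := rowLen_of_cells_eq_insert h r
  have hr1 := rowLen_of_cells_eq_insert h (r + 1)
  simp only [if_pos, if_neg (Nat.succ_ne_self r)] at hr hr1
  have := μ.rowLen_anti r (r + 1) (Nat.le_succ r)
  apply YoungDiagram.ext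
  rw [cells_removeFromRow (by omega), h, hr, Nat.add_sub_cancel,
    Finset.erase_insert (by simpa using rowEnd_notMem μ r)]

end YoungDiagram

open YoungDiagram

/-! ### Local rules -/

lemma AddBoxLE.refl (μ : YoungDiagram) : AddBoxLE μ μ := ⟨le_rfl, by omega⟩

lemma addBoxLE_addToRow {μ : YoungDiagram} {r : ℕ} (hr : μ.IsAddableRow r) :
    AddBoxLE μ (μ.addToRow r) :=
  ⟨le_sup_left, (card_addToRow hr).le⟩

lemma addBoxLE_removeFromRow {μ : YoungDiagram} {r : ℕ} (h : μ.rowLen (r + 1) < μ.rowLen r) :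
    AddBoxLE (μ.removeFromRow r) μ :=
  ⟨fun _ hx => (Finset.mem_filter.1 hx).1, (card_removeFromRow h).le⟩

lemma AddBoxLE.eq_or_card_eq {μ ν : YoungDiagram} (h : AddBoxLE μ ν) :
    ν = μ ∨ ν.card = μ.card + 1 := by
  rcases h.1.lt_or_eq with hlt | heq
  · exact .inr (le_antisymm h.2 (card_lt_card hlt))
  · exact .inl heq.symm

lemma inf_eq_of_addBoxLE_of_ne {μ lam ν : YoungDiagram} (hl : AddBoxLE μ lam)
    (hν : AddBoxLE μ ν) (hne : lam ≠ ν) : lam ⊓ ν = μ := by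
  have hμ : μ ≤ lam ⊓ ν := le_inf hl.1 hν.1
  refine (eq_of_le_of_card_le hμ (not_lt.1 fun hlt => hne ?_)).symm
  have h1 := eq_of_le_of_card_le (inf_le_left : lam ⊓ ν ≤ lam) (by have := hl.2; omega)
  have h2 := eq_of_le_of_card_le (inf_le_right : lam ⊓ ν ≤ ν) (by have := hν.2; omega)
  exact h1.symm.trans h2

lemma sup_eq_of_addBoxLE_of_ne {lam ν ρ : YoungDiagram} (hl : AddBoxLE lam ρ)
    (hν : AddBoxLE ν ρ) (hne : lam ≠ ν) : lam ⊔ ν = ρ := by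
  have hρ : lam ⊔ ν ≤ ρ := sup_le hl.1 hν.1
  refine eq_of_le_of_card_le hρ (not_lt.1 fun hlt => hne ?_)
  have h1 := eq_of_le_of_card_le (le_sup_left : lam ≤ lam ⊔ ν) (by have := hl.2; omega)
  have h2 := eq_of_le_of_card_le (le_sup_right : ν ≤ lam ⊔ ν) (by have := hν.2; omega)
  exact h1.trans h2.symm

/-- The corners of a growth-diagram cell below and left of its diagonal: `μ` bottom-left,
`lam` bottom-right, `ν` top-left, `e` the cell's entry. -/
def LowerConfig (μ lam ν : YoungDiagram) (e : Bool) : Prop :=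
  AddBoxLE μ lam ∧ AddBoxLE μ ν ∧ (e = true → lam = μ ∧ ν = μ)

def UpperConfig (lam ν ρ : YoungDiagram) : Prop :=
  AddBoxLE lam ρ ∧ AddBoxLE ν ρ

/-- Fomin's forward local rule for 0-1 fillings. -/
noncomputable def growthRule (μ lam ν : YoungDiagram) (e : Bool) : YoungDiagram :=
  if lam ≠ ν then lam ⊔ ν
  else if lam ≠ μ then lam.addToRow (newRow μ lam + 1)
  else if e then μ.addToRow 0 else μ

/-- Fomin's backward local rule. -/
noncomputable def growthRuleInv (lam ν ρ : YoungDiagram) : YoungDiagram × Bool :=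
  if lam ≠ ν then (lam ⊓ ν, false)
  else if ρ = lam then (lam, false)
  else if newRow lam ρ = 0 then (lam, true)
  else (lam.removeFromRow (newRow lam ρ - 1), false)

lemma growthRule_spec_of_ne {μ lam ν : YoungDiagram} (hl : AddBoxLE μ lam) (hν : AddBoxLE μ ν)
    (hne : lam ≠ ν) :
    UpperConfig lam ν (growthRule μ lam ν false) ∧
      (growthRule μ lam ν false).card + μ.card = lam.card + ν.card ∧
      growthRuleInv lam ν (growthRule μ lam ν false) = (μ, false) := by
  have hinf := inf_eq_of_addBoxLE_of_ne hl hν hne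
  have hcard := card_sup_add_card_inf lam ν
  rw [hinf] at hcard
  have hρ : growthRule μ lam ν false = lam ⊔ ν := if_pos hne
  have hμ : growthRuleInv lam ν (lam ⊔ ν) = (lam ⊓ ν, false) := if_pos hne
  rw [hρ, hμ, hinf]
  have := hl.2
  have := hν.2
  exact ⟨⟨⟨le_sup_left, by omega⟩, ⟨le_sup_right, by omega⟩⟩, hcard, rfl⟩

lemma growthRule_spec_self (μ : YoungDiagram) (e : Bool) :
    UpperConfig μ μ (growthRule μ μ μ e) ∧
      (growthRule μ μ μ e).card + μ.card = μ.card + μ.card + e.toNat ∧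
      growthRuleInv μ μ (growthRule μ μ μ e) = (μ, e) := by
  cases e
  · simp [growthRule, growthRuleInv, UpperConfig, AddBoxLE.refl μ]
  · have hadd : μ.IsAddableRow 0 := .inl rfl
    have hρ : growthRule μ μ μ true = μ.addToRow 0 := by simp [growthRule]
    have hμ : growthRuleInv μ μ (μ.addToRow 0) = (μ, true) := by
      simp [growthRuleInv, addToRow_ne hadd, newRow_addToRow hadd]
    rw [hρ, hμ]
    exact ⟨⟨addBoxLE_addToRow hadd, addBoxLE_addToRow hadd⟩, by simp [card_addToRow hadd]; omega,
      rfl⟩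

/- Removing the last cell of row `r` and adding a cell to row `r + 1` are possible under the
same condition `lam.rowLen (r + 1) < lam.rowLen r`; this is what makes the case `lam = ν ≠ μ`
invertible. -/
lemma growthRule_spec_of_cover {μ lam : YoungDiagram} (hl : AddBoxLE μ lam) (hne : lam ≠ μ) :
    UpperConfig lam lam (growthRule μ lam lam false) ∧
      (growthRule μ lam lam false).card + μ.card = lam.card + lam.card ∧
      growthRuleInv lam lam (growthRule μ lam lam false) = (μ, false) := by
  have hcard := hl.eq_or_card_eq.resolve_left hne
  obtain ⟨-, hcells⟩ := cells_eq_insert_of_card_eq hl.1 hcard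
  set r := newRow μ lam
  have hr := rowLen_of_cells_eq_insert hcells r
  have hr1 := rowLen_of_cells_eq_insert hcells (r + 1)
  simp only [if_pos, if_neg (Nat.succ_ne_self r)] at hr hr1
  have := μ.rowLen_anti r (r + 1) (Nat.le_succ r)
  have hadd : lam.IsAddableRow (r + 1) := .inr (by simp only [Nat.add_sub_cancel]; omega)
  have hρ : growthRule μ lam lam false = lam.addToRow (r + 1) := by simp [growthRule, hne, r]
  have hμ : growthRuleInv lam lam (lam.addToRow (r + 1)) = (μ, false) := by
    simp [growthRuleInv, addToRow_ne hadd, newRow_addToRow hadd,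
      removeFromRow_of_cells_eq_insert hcells, r]
  rw [hρ, hμ]
  exact ⟨⟨addBoxLE_addToRow hadd, addBoxLE_addToRow hadd⟩, by rw [card_addToRow hadd]; omega, rfl⟩

lemma growthRule_spec {μ lam ν : YoungDiagram} {e : Bool} (h : LowerConfig μ lam ν e) :
    UpperConfig lam ν (growthRule μ lam ν e) ∧
      (growthRule μ lam ν e).card + μ.card = lam.card + ν.card + e.toNat ∧
      growthRuleInv lam ν (growthRule μ lam ν e) = (μ, e) := by
  obtain ⟨hl, hν, he⟩ := h
  by_cases hne : lam = ν
  · subst hne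
    by_cases hself : lam = μ
    · subst hself
      exact growthRule_spec_self lam e
    · cases e
      · simpa using growthRule_spec_of_cover hl hself
      · exact absurd (he rfl).1 hself
  · cases e
    · simpa using growthRule_spec_of_ne hl hν hne
    · exact absurd ((he rfl).1.trans (he rfl).2.symm) hne

lemma growthRuleInv_spec_of_ne {lam ν ρ : YoungDiagram} (h : UpperConfig lam ν ρ)
    (hne : lam ≠ ν) :
    LowerConfig (lam ⊓ ν) lam ν false ∧ growthRule (lam ⊓ ν) lam ν false = ρ := by
  have hsup := sup_eq_of_addBoxLE_of_ne h.1 h.2 hne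
  have hcard := card_sup_add_card_inf lam ν
  rw [hsup] at hcard
  have := h.1.2
  have := h.2.2
  exact ⟨⟨⟨inf_le_left, by omega⟩, ⟨inf_le_right, by omega⟩, by simp⟩, (if_pos hne).trans hsup⟩

lemma growthRuleInv_spec_of_cover {lam ρ : YoungDiagram} (h : AddBoxLE lam ρ) (hne : ρ ≠ lam) :
    LowerConfig (growthRuleInv lam lam ρ).1 lam lam (growthRuleInv lam lam ρ).2 ∧
      growthRule (growthRuleInv lam lam ρ).1 lam lam (growthRuleInv lam lam ρ).2 = ρ := by
  obtain ⟨hadd, hcells⟩ := cells_eq_insert_of_card_eq h.1 (h.eq_or_card_eq.resolve_left hne)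
  have hρ : ∀ s, newRow lam ρ = s → lam.addToRow s = ρ := fun s hs => by
    subst hs
    exact YoungDiagram.ext ((cells_addToRow hadd).trans hcells.symm)
  rcases hs : newRow lam ρ with _ | t
  · have hinv : growthRuleInv lam lam ρ = (lam, true) := by simp [growthRuleInv, hne, hs]
    rw [hinv]
    exact ⟨⟨AddBoxLE.refl lam, AddBoxLE.refl lam, fun _ => ⟨rfl, rfl⟩⟩, by
      simpa [growthRule] using hρ 0 hs⟩
  · have hinv : growthRuleInv lam lam ρ = (lam.removeFromRow t, false) := by
      simp [growthRuleInv, hne, hs]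
    rw [hinv]
    have hrow : lam.rowLen (t + 1) < lam.rowLen t := by
      simpa [IsAddableRow, hs] using hadd
    refine ⟨⟨addBoxLE_removeFromRow hrow, addBoxLE_removeFromRow hrow, by simp⟩, ?_⟩
    simp [growthRule, (removeFromRow_ne hrow).symm, newRow_removeFromRow hrow, hρ (t + 1) hs]

lemma growthRuleInv_spec {lam ν ρ : YoungDiagram} (h : UpperConfig lam ν ρ) :
    LowerConfig (growthRuleInv lam ν ρ).1 lam ν (growthRuleInv lam ν ρ).2 ∧
      growthRule (growthRuleInv lam ν ρ).1 lam ν (growthRuleInv lam ν ρ).2 = ρ := by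
  by_cases hne : lam = ν
  · subst hne
    by_cases hρ : ρ = lam
    · subst hρ
      simp [growthRuleInv, growthRule, LowerConfig, AddBoxLE.refl ρ]
    · exact growthRuleInv_spec_of_cover h.1 hρ
  · have hinv : growthRuleInv lam ν ρ = (lam ⊓ ν, false) := if_pos hne
    rw [hinv]
    exact growthRuleInv_spec_of_ne h hne

/-! ### Growth diagrams -/

lemma YoungDiagram.eq_iff_of_card_eq_add {μ lam : YoungDiagram} {s : ℕ} (hle : μ ≤ lam)
    (hcard : lam.card = μ.card + s) : lam = μ ↔ s = 0 := by
  constructor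
  · rintro rfl; omega
  · intro hs
    exact (eq_of_le_of_card_le hle (by omega)).symm

def IsRookAt (f : ℕ × ℕ → ℕ) (c : ℕ × ℕ) : Prop :=
  f c ≠ 0 → (∀ i < c.1, f (i, c.2) = 0) ∧ ∀ j < c.2, f (c.1, j) = 0

lemma atMostOnePerRowCol_iff (f : ℕ × ℕ → ℕ) : AtMostOnePerRowCol f ↔ ∀ c, IsRookAt f c := by
  constructor
  · intro h c hc
    refine ⟨fun i hi => ?_, fun j hj => ?_⟩ <;> by_contra h'
    · exact (h _ _ h' hc (by simp [Prod.ext_iff]; omega)).2 rfl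
    · exact (h _ _ h' hc (by simp [Prod.ext_iff]; omega)).1 rfl
  · rintro h ⟨i, j⟩ ⟨i', j'⟩ hc hd hne
    constructor <;> rintro (rfl | rfl)
    · rcases Nat.lt_or_gt_of_ne (fun hj : j = j' => hne (by rw [hj])) with hj | hj
      · exact hc ((h _ hd).2 j hj)
      · exact hd ((h _ hc).2 j' hj)
    · rcases Nat.lt_or_gt_of_ne (fun hi : i = i' => hne (by rw [hi])) with hi | hi
      · exact hc ((h _ hd).1 i hi)
      · exact hd ((h _ hc).1 i' hi)

def ones (f : ℕ × ℕ → ℕ) (a b : ℕ) : ℕ :=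
  ∑ i ∈ Finset.range b, ∑ j ∈ Finset.range a, (decide (f (i, j) ≠ 0)).toNat

lemma ones_zero_left (f : ℕ × ℕ → ℕ) (b : ℕ) : ones f 0 b = 0 := by simp [ones]

lemma ones_zero_right (f : ℕ × ℕ → ℕ) (a : ℕ) : ones f a 0 = 0 := by simp [ones]

lemma ones_succ_left (f : ℕ × ℕ → ℕ) (a b : ℕ) :
    ones f (a + 1) b = ones f a b + ∑ i ∈ Finset.range b, (decide (f (i, a) ≠ 0)).toNat := by
  simp only [ones, Finset.sum_range_succ, Finset.sum_add_distrib]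

lemma ones_succ_right (f : ℕ × ℕ → ℕ) (a b : ℕ) :
    ones f a (b + 1) = ones f a b + ∑ j ∈ Finset.range a, (decide (f (b, j) ≠ 0)).toNat :=
  Finset.sum_range_succ _ _

lemma ones_succ_succ (f : ℕ × ℕ → ℕ) (a b : ℕ) :
    ones f (a + 1) (b + 1) + ones f a b =
      ones f (a + 1) b + ones f a (b + 1) + (decide (f (b, a) ≠ 0)).toNat := by
  rw [ones_succ_left f a (b + 1), ones_succ_left f a b, Finset.sum_range_succ]
  omega

lemma eq_iff_forall_eq_zero_of_card_eq_ones {f : ℕ × ℕ → ℕ} {a b : ℕ} {μ lam ν : YoungDiagram}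
    (hμ : μ.card = ones f a b) (hlam : lam.card = ones f (a + 1) b)
    (hν : ν.card = ones f a (b + 1)) (hl : μ ≤ lam) (hn : μ ≤ ν) :
    (lam = μ ↔ ∀ i < b, f (i, a) = 0) ∧ (ν = μ ↔ ∀ j < a, f (b, j) = 0) := by
  rw [YoungDiagram.eq_iff_of_card_eq_add hl (by rw [hlam, hμ, ones_succ_left]),
    YoungDiagram.eq_iff_of_card_eq_add hn (by rw [hν, hμ, ones_succ_right])]
  simp [Finset.sum_eq_zero_iff]

lemma isRookAt_of_lowerConfig {f : ℕ × ℕ → ℕ} {a b : ℕ} {μ lam ν : YoungDiagram}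
    (hμ : μ.card = ones f a b) (hlam : lam.card = ones f (a + 1) b)
    (hν : ν.card = ones f a (b + 1)) (h : LowerConfig μ lam ν (f (b, a) ≠ 0)) :
    IsRookAt f (b, a) := fun hf => by
  have := eq_iff_forall_eq_zero_of_card_eq_ones hμ hlam hν h.1.1 h.2.1.1
  exact ⟨this.1.1 (h.2.2 (by simpa using hf)).1, this.2.1 (h.2.2 (by simpa using hf)).2⟩

lemma lowerConfig_of_isRookAt {f : ℕ × ℕ → ℕ} {a b : ℕ} {μ lam ν : YoungDiagram}
    (hμ : μ.card = ones f a b) (hlam : lam.card = ones f (a + 1) b)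
    (hν : ν.card = ones f a (b + 1)) (hl : AddBoxLE μ lam) (hn : AddBoxLE μ ν)
    (h : IsRookAt f (b, a)) : LowerConfig μ lam ν (f (b, a) ≠ 0) := by
  have := eq_iff_forall_eq_zero_of_card_eq_ones hμ hlam hν hl.1 hn.1
  refine ⟨hl, hn, fun hf => ?_⟩
  have hf' := h (by simpa using hf)
  exact ⟨this.1.2 hf'.1, this.2.2 hf'.2⟩

/-- The growth diagram of `f`: `grow f a b` sits at the lattice point with `a` columns to its left
and `b` rows below it, so that the cell `(b, a)` has corners `(a, b)` and `(a + 1, b + 1)`. -/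
noncomputable def grow (f : ℕ × ℕ → ℕ) : ℕ → ℕ → YoungDiagram
  | 0, _ => ⊥
  | _ + 1, 0 => ⊥
  | a + 1, b + 1 => growthRule (grow f a b) (grow f (a + 1) b) (grow f a (b + 1)) (f (b, a) ≠ 0)
termination_by a b => a + b

section Growth

variable (f : ℕ × ℕ → ℕ)

@[simp] lemma grow_zero_left (b : ℕ) : grow f 0 b = ⊥ := by simp [grow]

@[simp] lemma grow_zero_right (a : ℕ) : grow f a 0 = ⊥ := by cases a <;> simp [grow]

lemma grow_succ_succ (a b : ℕ) :
    grow f (a + 1) (b + 1) =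
      growthRule (grow f a b) (grow f (a + 1) b) (grow f a (b + 1)) (f (b, a) ≠ 0) := by
  rw [grow]

def LowerConfigAt (i j : ℕ) : Prop :=
  LowerConfig (grow f j i) (grow f (j + 1) i) (grow f j (i + 1)) (f (i, j) ≠ 0)

variable {f}

lemma card_grow {a b : ℕ} (h : ∀ i < b, ∀ j < a, LowerConfigAt f i j) :
    (grow f a b).card = ones f a b := by
  induction a, b using grow.induct with
  | case1 b => simp [ones_zero_left]
  | case2 a => simp [ones_zero_right]
  | case3 a b ih₁ ih₂ ih₃ =>
    show (grow f (a + 1) (b + 1)).card = ones f (a + 1) (b + 1)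
    have hspec := (growthRule_spec (h b (by omega) a (by omega))).2.1
    rw [← grow_succ_succ] at hspec
    have := ones_succ_succ f a b
    have := ih₁ fun i hi j hj => h i (by omega) j (by omega)
    have := ih₂ fun i hi j hj => h i (by omega) j hj
    have := ih₃ fun i hi j hj => h i hi j (by omega)
    omega

lemma upperConfig_grow {i j : ℕ} (h : LowerConfigAt f i j) :
    UpperConfig (grow f (j + 1) i) (grow f j (i + 1)) (grow f (j + 1) (i + 1)) :=
  grow_succ_succ f j i ▸ (growthRule_spec h).1

lemma growthRuleInv_grow {i j : ℕ} (h : LowerConfigAt f i j) :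
    growthRuleInv (grow f (j + 1) i) (grow f j (i + 1)) (grow f (j + 1) (i + 1)) =
      (grow f j i, decide (f (i, j) ≠ 0)) :=
  grow_succ_succ f j i ▸ (growthRule_spec h).2.2

lemma addBoxLE_grow_succ_left {a b : ℕ} (h : 0 < b → LowerConfigAt f (b - 1) a) :
    AddBoxLE (grow f a b) (grow f (a + 1) b) := by
  cases b with
  | zero => simpa using AddBoxLE.refl ⊥
  | succ b => exact (upperConfig_grow (h b.succ_pos)).2

lemma addBoxLE_grow_succ_right {a b : ℕ} (h : 0 < a → LowerConfigAt f b (a - 1)) :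
    AddBoxLE (grow f a b) (grow f a (b + 1)) := by
  cases a with
  | zero => simpa using AddBoxLE.refl ⊥
  | succ a => exact (upperConfig_grow (h a.succ_pos)).1

lemma lowerConfigAt_of_atMostOnePerRowCol (hf : AtMostOnePerRowCol f) (i j : ℕ) :
    LowerConfigAt f i j := by
  induction h : i + j using Nat.strong_induction_on generalizing i j with
  | _ n ih =>
    -- The corner cardinalities at the cell `(i, j)` only involve cells of smaller index sum.
    have hlow : ∀ i' ≤ i, ∀ j' ≤ j, (i', j') ≠ (i, j) → LowerConfigAt f i' j' :=
      fun i' hi j' hj hne => ih (i' + j') (by grind) i' j' rfl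
    have hcard : ∀ i' ≤ i + 1, ∀ j' ≤ j + 1, i' + j' ≤ i + j + 1 →
        (grow f j' i').card = ones f j' i' := fun i' hi j' hj hij =>
      card_grow fun i'' hi'' j'' hj'' => hlow i'' (by omega) j'' (by omega) (by grind)
    exact lowerConfig_of_isRookAt (hcard i (by omega) j (by omega) (by omega))
      (hcard i (by omega) (j + 1) le_rfl (by omega)) (hcard (i + 1) le_rfl j (by omega) (by omega))
      (addBoxLE_grow_succ_left fun hi => hlow _ (by omega) j le_rfl (by grind))
      (addBoxLE_grow_succ_right fun hj => hlow i le_rfl _ (by omega) (by grind))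
      ((atMostOnePerRowCol_iff f).1 hf (i, j))

end Growth

/-! ### The boundary path -/

section BoundaryPath

variable {k : ℕ} (w : Fin k → Bool)

lemma card_filter_lt_succ {t : ℕ} (ht : t < k) (p : Fin k → Prop) [DecidablePred p] :
    (Finset.univ.filter fun j : Fin k => j.val < t + 1 ∧ p j).card =
      (Finset.univ.filter fun j : Fin k => j.val < t ∧ p j).card +
        if p ⟨t, ht⟩ then 1 else 0 := by
  have hsplit : ∀ j : Fin k, (j.val < t + 1 ∧ p j) ↔ (j.val < t ∧ p j) ∨ (j = ⟨t, ht⟩ ∧ p j) :=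
    fun j => by rw [Fin.ext_iff]; by_cases hp : p j <;> simp [hp]; omega
  rw [Finset.filter_congr fun j _ => hsplit j, Finset.filter_or,
    Finset.card_union_of_disjoint (Finset.disjoint_filter.2 fun j _ h h' => by
      rw [h'.1] at h; exact lt_irrefl _ h.1)]
  congr 1
  by_cases h : p ⟨t, ht⟩
  · rw [if_pos h]
    refine Finset.card_eq_one.2 ⟨(⟨t, ht⟩ : Fin k), ?_⟩
    ext j
    simp only [Finset.mem_filter, Finset.mem_univ, true_and, Finset.mem_singleton]
    exact ⟨And.left, fun hj => ⟨hj, hj ▸ h⟩⟩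
  · simp [h]

def countBefore (b : Bool) (t : ℕ) : ℕ :=
  (Finset.univ.filter fun j : Fin k => j.val < t ∧ w j = b).card

/-- The number of `D`s from position `t` on: after `t` steps the boundary path is at the lattice
point `(countBefore w true t, pathY w t)`. -/
def pathY (t : ℕ) : ℕ :=
  (Finset.univ.filter fun j : Fin k => t ≤ j.val ∧ w j = false).card

@[simp] lemma countBefore_zero (b : Bool) : countBefore w b 0 = 0 := by simp [countBefore]

lemma countBefore_succ (b : Bool) {t : ℕ} (ht : t < k) :
    countBefore w b (t + 1) = countBefore w b t + if w ⟨t, ht⟩ = b then 1 else 0 :=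
  card_filter_lt_succ ht _

lemma countBefore_mono (b : Bool) {s t : ℕ} (h : s ≤ t) : countBefore w b s ≤ countBefore w b t :=
  Finset.card_le_card fun j => by
    simp only [Finset.mem_filter, Finset.mem_univ, true_and]
    exact fun hj => ⟨by omega, hj.2⟩

lemma countBefore_true_add_false {t : ℕ} (ht : t ≤ k) :
    countBefore w true t + countBefore w false t = t := by
  induction t with
  | zero => simp
  | succ t ih =>
    have ht' : t < k := ht
    rw [countBefore_succ w _ ht', countBefore_succ w _ ht']
    have := ih ht'.le
    cases w ⟨t, ht'⟩ <;> simp <;> omega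

lemma pathY_add_countBefore (t : ℕ) : pathY w t + countBefore w false t = pathY w 0 := by
  have := Finset.card_filter_add_card_filter_not
    (s := Finset.univ.filter fun j : Fin k => w j = false) (fun j => t ≤ j.val)
  simpa [pathY, countBefore, Finset.filter_filter, and_comm] using this

lemma pathY_length : pathY w k = 0 := by
  simp [pathY]

lemma pathY_eq_succ {t : ℕ} (ht : t < k) :
    pathY w t = pathY w (t + 1) + if w ⟨t, ht⟩ = false then 1 else 0 := by
  have h₁ := pathY_add_countBefore w t
  have h₂ := pathY_add_countBefore w (t + 1)
  rw [countBefore_succ w _ ht] at h₂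
  omega

end BoundaryPath

namespace Encodes

variable {F : YoungDiagram} {k : ℕ} {w : Fin k → Bool} (hw : Encodes F w)
include hw

lemma countBefore_length : countBefore w true k = F.rowLen 0 := by
  rw [← hw.1, countBefore]
  simp

lemma pathY_zero : pathY w 0 = F.colLen 0 := by
  rw [← hw.2.1, pathY]
  simp

lemma colLen_countBefore_of_right {t : ℕ} (ht : t < k) (hR : w ⟨t, ht⟩ = true) :
    F.colLen (countBefore w true t) = pathY w t := by
  have h := hw.2.2 ⟨t, ht⟩ hR
  have hX : (Finset.univ.filter fun j : Fin k => j ≤ ⟨t, ht⟩ ∧ w j = true).card =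
      countBefore w true (t + 1) := by
    simp only [countBefore, Fin.le_def, Nat.lt_succ_iff]
  have hY : (Finset.univ.filter fun j : Fin k => ⟨t, ht⟩ < j ∧ w j = false).card =
      pathY w (t + 1) := by
    simp only [pathY, Fin.lt_def, Nat.succ_le_iff]
  rw [hX, hY, countBefore_succ w _ ht, if_pos hR, Nat.add_sub_cancel] at h
  simp [h, pathY_eq_succ w ht, hR]

lemma countBefore_add_colLen {t : ℕ} (ht : t ≤ k) :
    countBefore w true t + F.colLen 0 = t + pathY w t := by
  have := countBefore_true_add_false w ht
  have := pathY_add_countBefore w t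
  rw [hw.pathY_zero] at this
  omega

lemma length_eq : F.rowLen 0 + F.colLen 0 = k := by
  have := hw.countBefore_add_colLen le_rfl
  rwa [hw.countBefore_length, pathY_length, Nat.add_zero] at this

lemma colLen_le_pathY {t : ℕ} (ht : t ≤ k) : F.colLen (countBefore w true t) ≤ pathY w t := by
  induction ht using Nat.decreasingInduction with
  | self => simp [hw.countBefore_length, pathY_length, colLen_rowLen_zero]
  | of_succ t ht ih =>
    rw [countBefore_succ w _ ht, pathY_eq_succ w ht] at *
    cases hR : w ⟨t, ht⟩
    · simp only [hR, Bool.false_eq_true, if_true, if_false, add_zero] at ih ⊢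
      omega
    · exact (hw.colLen_countBefore_of_right ht hR).trans_le (by simp [pathY_eq_succ w ht, hR])

/- `F.colLen (a - 1)` is the top of the boundary on the line `x = a`; for `a = 0` truncated
subtraction gives `F.colLen 0`, the height of `F`, as it should. -/
lemma pathY_le_colLen {t : ℕ} (ht : t ≤ k) :
    pathY w t ≤ F.colLen (countBefore w true t - 1) := by
  induction t with
  | zero => simp [hw.pathY_zero]
  | succ t ih =>
    have ht' : t < k := ht
    have ih := ih ht'.le
    rw [countBefore_succ w _ ht']
    have hY := pathY_eq_succ w ht'
    cases hR : w ⟨t, ht'⟩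
    · simp only [hR, Bool.false_eq_true, if_true, if_false, add_zero] at hY ⊢
      omega
    · have := hw.colLen_countBefore_of_right ht' hR
      simp only [hR, Bool.true_eq_false, if_true, if_false, Nat.add_sub_cancel] at hY ⊢
      omega

end Encodes

section BoundaryPoints

variable {F : YoungDiagram} {k : ℕ} {w : Fin k → Bool}

lemma right_of_countBefore_succ {t : ℕ} (ht : t < k)
    (h : countBefore w true (t + 1) = countBefore w true t + 1) : w ⟨t, ht⟩ = true := by
  rw [countBefore_succ w _ ht] at h
  by_contra hD
  simp [hD] at h

lemma down_of_pathY_eq_succ {t : ℕ} (ht : t < k) (h : pathY w t = pathY w (t + 1) + 1) :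
    w ⟨t, ht⟩ = false := by
  rw [pathY_eq_succ w ht] at h
  by_contra hR
  simp [hR] at h

lemma Encodes.countBefore_pathY_of_boundary (hw : Encodes F w) {a b : ℕ} (ha : a ≤ F.rowLen 0)
    (h₁ : F.colLen a ≤ b) (h₂ : b ≤ F.colLen (a - 1)) :
    a + (F.colLen 0 - b) ≤ k ∧ countBefore w true (a + (F.colLen 0 - b)) = a ∧
      pathY w (a + (F.colLen 0 - b)) = b := by
  have hb : b ≤ F.colLen 0 := h₂.trans (F.colLen_anti 0 _ (Nat.zero_le _))
  have htk : a + (F.colLen 0 - b) ≤ k := by have := hw.length_eq; omega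
  set t := a + (F.colLen 0 - b)
  have hid := hw.countBefore_add_colLen htk
  have hlo := hw.colLen_le_pathY htk
  have hhi := hw.pathY_le_colLen htk
  -- Left or right of the line `x = a`, the bounds `hlo` and `hhi` contradict `hid`.
  have hX : countBefore w true t = a := by
    rcases lt_trichotomy (countBefore w true t) a with hlt | heq | hgt
    · have := F.colLen_anti (countBefore w true t) (a - 1) (by omega)
      omega
    · exact heq
    · have := F.colLen_anti a (countBefore w true t - 1) (by omega)
      omega
  exact ⟨htk, hX, by omega⟩

end BoundaryPoints

/-! ### Oscillating tableaux and the inverse construction -/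

def IsOscillating {k : ℕ} (w : Fin k → Bool) (lam : Fin (k + 1) → YoungDiagram) : Prop :=
  lam 0 = ⊥ ∧ lam (Fin.last k) = ⊥ ∧
    ∀ i : Fin k,
      if w i then AddBoxLE (lam i.castSucc) (lam i.succ)
      else AddBoxLE (lam i.succ) (lam i.castSucc)

section Oscillating

variable {k : ℕ} {w : Fin k → Bool} {lam : Fin (k + 1) → YoungDiagram}

lemma IsOscillating.addBoxLE_of_right (ho : IsOscillating w lam) {t : ℕ} (ht : t < k)
    (hR : w ⟨t, ht⟩ = true) : AddBoxLE (lam (Fin.clamp t k)) (lam (Fin.clamp (t + 1) k)) := by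
  have h := ho.2.2 ⟨t, ht⟩
  rw [if_pos hR] at h
  convert h using 2 <;> ext <;> simp <;> omega

lemma IsOscillating.addBoxLE_of_down (ho : IsOscillating w lam) {t : ℕ} (ht : t < k)
    (hD : w ⟨t, ht⟩ = false) : AddBoxLE (lam (Fin.clamp (t + 1) k)) (lam (Fin.clamp t k)) := by
  have h := ho.2.2 ⟨t, ht⟩
  rw [if_neg (by simp [hD])] at h
  convert h using 2 <;> ext <;> simp <;> omega

end Oscillating

noncomputable def boundaryLabels {k : ℕ} (w : Fin k → Bool) (f : ℕ × ℕ → ℕ) :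
    Fin (k + 1) → YoungDiagram :=
  fun t => grow f (countBefore w true t) (pathY w t)

lemma isOscillating_boundaryLabels {k : ℕ} (w : Fin k → Bool) {f : ℕ × ℕ → ℕ}
    (hf : AtMostOnePerRowCol f) : IsOscillating w (boundaryLabels w f) := by
  have hcell := lowerConfigAt_of_atMostOnePerRowCol hf
  refine ⟨by simp [boundaryLabels], by simp [boundaryLabels, pathY_length], fun i => ?_⟩
  have hX := countBefore_succ w true i.isLt
  have hY := pathY_eq_succ w i.isLt
  simp only [boundaryLabels, Fin.val_castSucc, Fin.val_succ]
  cases hR : w i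
  · simp only [hR, Bool.false_eq_true, if_false, if_true, add_zero] at hX hY ⊢
    rw [hX, hY]
    exact addBoxLE_grow_succ_right fun _ => hcell _ _
  · simp only [hR, Bool.true_eq_false, if_false, if_true, add_zero] at hX hY ⊢
    rw [hX, hY]
    exact addBoxLE_grow_succ_left fun _ => hcell _ _

/-- For the lattice points that matter, `F.colLen a ≤ b` means that `(a, b)` is on the boundary
of `F`, which the path of `w` passes at time `a + (F.colLen 0 - b)`. -/
noncomputable def growInv (F : YoungDiagram) {k : ℕ} (lam : Fin (k + 1) → YoungDiagram)
    (a b : ℕ) : YoungDiagram :=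
  if b < F.colLen a then
    (growthRuleInv (growInv F lam (a + 1) b) (growInv F lam a (b + 1))
      (growInv F lam (a + 1) (b + 1))).1
  else lam (Fin.clamp (a + (F.colLen 0 - b)) k)
termination_by (F.rowLen 0 - a) + (F.colLen 0 - b)
decreasing_by
  all_goals
    have := F.lt_rowLen_zero_of_lt_colLen ‹_›
    have := F.colLen_anti 0 a (Nat.zero_le a)
    omega

section GrowInv

variable {F : YoungDiagram} {k : ℕ} {w : Fin k → Bool} {lam : Fin (k + 1) → YoungDiagram}

lemma growInv_of_lt {a b : ℕ} (hb : b < F.colLen a) :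
    growInv F lam a b = (growthRuleInv (growInv F lam (a + 1) b) (growInv F lam a (b + 1))
      (growInv F lam (a + 1) (b + 1))).1 := by
  rw [growInv, if_pos hb]

lemma growInv_of_not_lt {a b : ℕ} (hb : ¬ b < F.colLen a) :
    growInv F lam a b = lam (Fin.clamp (a + (F.colLen 0 - b)) k) := by
  rw [growInv, if_neg hb]

variable (hw : Encodes F w) (ho : IsOscillating w lam)
include hw ho

lemma addBoxLE_growInv_succ_left_of_boundary {a : ℕ} (ha : a < F.rowLen 0) :
    AddBoxLE (growInv F lam a (F.colLen a)) (growInv F lam (a + 1) (F.colLen a)) := by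
  have h₁ : ¬ F.colLen a < F.colLen (a + 1) := not_lt.2 (F.colLen_anti _ _ a.le_succ)
  have ht₀ := hw.countBefore_pathY_of_boundary ha.le le_rfl (F.colLen_anti _ _ (Nat.sub_le a 1))
  have ht₁ := hw.countBefore_pathY_of_boundary (a := a + 1) ha (not_lt.1 h₁) (by simp)
  have heq : a + 1 + (F.colLen 0 - F.colLen a) = a + (F.colLen 0 - F.colLen a) + 1 := by omega
  rw [heq] at ht₁
  rw [growInv_of_not_lt (lt_irrefl _), growInv_of_not_lt h₁, heq]
  exact ho.addBoxLE_of_right ht₁.1 (right_of_countBefore_succ _ (by omega))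

lemma addBoxLE_growInv_succ_right_of_boundary {a b : ℕ} (hb : F.colLen a ≤ b)
    (hb' : b < F.colLen (a - 1)) : AddBoxLE (growInv F lam a b) (growInv F lam a (b + 1)) := by
  have ha : a ≤ F.rowLen 0 := by have := F.lt_rowLen_zero_of_lt_colLen hb'; omega
  have ht₀ := hw.countBefore_pathY_of_boundary ha hb hb'.le
  have ht₁ := hw.countBefore_pathY_of_boundary ha (by omega : F.colLen a ≤ b + 1) hb'
  have hH : b + 1 ≤ F.colLen 0 := hb'.trans_le (F.colLen_anti _ _ (Nat.zero_le _))
  have heq : a + (F.colLen 0 - b) = a + (F.colLen 0 - (b + 1)) + 1 := by omega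
  rw [heq] at ht₀
  rw [growInv_of_not_lt (not_lt.2 hb), growInv_of_not_lt (by omega), heq]
  exact ho.addBoxLE_of_down ht₀.1 (down_of_pathY_eq_succ _ (by omega))

lemma addBoxLE_growInv (a b : ℕ) :
    (b ≤ F.colLen a → a < F.rowLen 0 → AddBoxLE (growInv F lam a b) (growInv F lam (a + 1) b)) ∧
      (b < F.colLen (a - 1) → AddBoxLE (growInv F lam a b) (growInv F lam a (b + 1))) := by
  fun_induction growInv F lam a b with
  | case1 a b hb ih₁ ih₂ _ =>
    have hcfg := (growthRuleInv_spec ⟨ih₁.2 hb, ih₂.1 hb (F.lt_rowLen_zero_of_lt_colLen hb)⟩).1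
    exact ⟨fun _ _ => hcfg.1, fun _ => hcfg.2.1⟩
  | case2 a b hb =>
    rw [← growInv_of_not_lt (lam := lam) hb]
    refine ⟨fun hb' ha => ?_, addBoxLE_growInv_succ_right_of_boundary hw ho (not_lt.1 hb)⟩
    obtain rfl : b = F.colLen a := le_antisymm hb' (not_lt.1 hb)
    exact addBoxLE_growInv_succ_left_of_boundary hw ho ha

lemma growInv_spec {a b : ℕ} (hb : b < F.colLen a) :
    LowerConfig (growInv F lam a b) (growInv F lam (a + 1) b) (growInv F lam a (b + 1))
        (growthRuleInv (growInv F lam (a + 1) b) (growInv F lam a (b + 1))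
          (growInv F lam (a + 1) (b + 1))).2 ∧
      growthRule (growInv F lam a b) (growInv F lam (a + 1) b) (growInv F lam a (b + 1))
        (growthRuleInv (growInv F lam (a + 1) b) (growInv F lam a (b + 1))
          (growInv F lam (a + 1) (b + 1))).2 = growInv F lam (a + 1) (b + 1) := by
  rw [growInv_of_lt hb]
  exact growthRuleInv_spec ⟨(addBoxLE_growInv hw ho (a + 1) b).2 hb,
    (addBoxLE_growInv hw ho a (b + 1)).1 hb (F.lt_rowLen_zero_of_lt_colLen hb)⟩

lemma growInv_zero_left {b : ℕ} (hb : b ≤ F.colLen 0) : growInv F lam 0 b = ⊥ := by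
  induction hb using Nat.decreasingInduction with
  | self =>
    rw [growInv_of_not_lt (lt_irrefl _), Nat.sub_self]
    convert ho.1 using 2
    ext; simp
  | of_succ b hb ih =>
    exact le_bot_iff.1 (ih ▸ ((addBoxLE_growInv hw ho 0 b).2 hb).1)

lemma growInv_zero_right {a : ℕ} (ha : a ≤ F.rowLen 0) : growInv F lam a 0 = ⊥ := by
  induction ha using Nat.decreasingInduction with
  | self =>
    rw [growInv_of_not_lt (by simp [colLen_rowLen_zero]), Nat.sub_zero, hw.length_eq]
    convert ho.2.1 using 2
    ext; simp
  | of_succ a ha ih =>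
    exact le_bot_iff.1 (ih ▸ ((addBoxLE_growInv hw ho a 0).1 (Nat.zero_le _) ha).1)

end GrowInv

noncomputable def fillingOf (F : YoungDiagram) {k : ℕ} (lam : Fin (k + 1) → YoungDiagram)
    (c : ℕ × ℕ) : ℕ :=
  if c ∈ F then
    (growthRuleInv (growInv F lam (c.2 + 1) c.1) (growInv F lam c.2 (c.1 + 1))
      (growInv F lam (c.2 + 1) (c.1 + 1))).2.toNat
  else 0

section FillingOf

variable {F : YoungDiagram} {k : ℕ} {w : Fin k → Bool} {lam : Fin (k + 1) → YoungDiagram}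

lemma filling01_fillingOf : Filling01 F (fillingOf F lam) := by
  intro c hc
  unfold fillingOf at hc ⊢
  split_ifs at hc ⊢ with hF
  · refine ⟨hF, ?_⟩
    revert hc
    cases (growthRuleInv _ _ _).2 <;> simp
  · exact absurd rfl hc

lemma decide_fillingOf_ne_zero {i j : ℕ} (h : (i, j) ∈ F) :
    decide (fillingOf F lam (i, j) ≠ 0) =
      (growthRuleInv (growInv F lam (j + 1) i) (growInv F lam j (i + 1))
        (growInv F lam (j + 1) (i + 1))).2 := by
  simp only [fillingOf, if_pos h]
  cases (growthRuleInv _ _ _).2 <;> simp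

variable (hw : Encodes F w) (ho : IsOscillating w lam)
include hw ho

lemma grow_fillingOf {a b : ℕ} (ha : a ≤ F.rowLen 0) (hb : b ≤ F.colLen (a - 1)) :
    grow (fillingOf F lam) a b = growInv F lam a b := by
  fun_induction grow (fillingOf F lam) a b with
  | case1 b => exact (growInv_zero_left hw ho hb).symm
  | case2 a => exact (growInv_zero_right hw ho ha).symm
  | case3 a b ih₁ ih₂ ih₃ =>
    have hab : b < F.colLen a := by simpa using hb
    have hca := F.colLen_anti (a - 1) a (Nat.sub_le a 1)
    rw [ih₁ (by omega) (by omega), ih₂ ha (by simpa using hab.le), ih₃ (by omega) (by omega),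
      decide_fillingOf_ne_zero (mem_iff_lt_colLen.2 hab)]
    exact (growInv_spec hw ho hab).2

lemma lowerConfigAt_fillingOf {i j : ℕ} (h : (i, j) ∈ F) :
    LowerConfigAt (fillingOf F lam) i j := by
  have hij := mem_iff_lt_colLen.1 h
  have hW := F.lt_rowLen_zero_of_lt_colLen hij
  have hca := F.colLen_anti (j - 1) j (Nat.sub_le j 1)
  unfold LowerConfigAt
  rw [grow_fillingOf hw ho (by omega) (by omega), grow_fillingOf hw ho hW (by simpa using hij.le),
    grow_fillingOf hw ho (by omega) (by omega), decide_fillingOf_ne_zero h]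
  exact (growInv_spec hw ho hij).1

lemma card_grow_fillingOf {a b : ℕ} (hb : b ≤ F.colLen (a - 1)) :
    (grow (fillingOf F lam) a b).card = ones (fillingOf F lam) a b :=
  card_grow fun i hi j hj => lowerConfigAt_fillingOf hw ho
    (mem_iff_lt_colLen.2 (hi.trans_le (hb.trans (F.colLen_anti _ _ (by omega)))))

lemma atMostOnePerRowCol_fillingOf : AtMostOnePerRowCol (fillingOf F lam) := by
  refine (atMostOnePerRowCol_iff _).2 fun ⟨i, j⟩ => ?_
  by_cases h : (i, j) ∈ F
  · have hij := mem_iff_lt_colLen.1 h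
    have hca := F.colLen_anti (j - 1) j (Nat.sub_le j 1)
    exact isRookAt_of_lowerConfig (card_grow_fillingOf hw ho (by omega))
      (card_grow_fillingOf hw ho (by simpa using hij.le))
      (card_grow_fillingOf hw ho (by omega)) (lowerConfigAt_fillingOf hw ho h)
  · intro hne
    exact absurd (filling01_fillingOf _ hne).1 h

lemma boundaryLabels_fillingOf : boundaryLabels w (fillingOf F lam) = lam := by
  funext t
  have ht := Nat.lt_succ_iff.1 t.isLt
  have hX : countBefore w true t ≤ F.rowLen 0 :=
    hw.countBefore_length ▸ countBefore_mono w true ht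
  have hlo := hw.colLen_le_pathY ht
  have hid := hw.countBefore_add_colLen ht
  have hH := hw.pathY_zero ▸ pathY_add_countBefore w t
  rw [boundaryLabels, grow_fillingOf hw ho hX (hw.pathY_le_colLen ht),
    growInv_of_not_lt (not_lt.2 hlo)]
  congr 1
  ext
  simp only [Fin.coe_clamp]
  omega

end FillingOf

lemma growInv_boundaryLabels {F : YoungDiagram} {k : ℕ} {w : Fin k → Bool} (hw : Encodes F w)
    {f : ℕ × ℕ → ℕ} (hf : AtMostOnePerRowCol f) {a b : ℕ} (ha : a ≤ F.rowLen 0)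
    (hb : b ≤ F.colLen (a - 1)) : growInv F (boundaryLabels w f) a b = grow f a b := by
  fun_induction growInv F (boundaryLabels w f) a b with
  | case1 a b hab ih₁ ih₂ ih₃ =>
    have hW := F.lt_rowLen_zero_of_lt_colLen hab
    have hca := F.colLen_anti (a - 1) a (Nat.sub_le a 1)
    rw [ih₁ hW (by simpa using hab.le), ih₂ ha (by omega), ih₃ hW (by simpa using hab)]
    rw [growthRuleInv_grow (lowerConfigAt_of_atMostOnePerRowCol hf b a)]
  | case2 a b hab =>
    obtain ⟨htk, hX, hY⟩ := hw.countBefore_pathY_of_boundary ha (not_lt.1 hab) hb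
    simp only [boundaryLabels, Fin.coe_clamp, min_eq_left htk, hX, hY]

lemma fillingOf_boundaryLabels {F : YoungDiagram} {k : ℕ} {w : Fin k → Bool} (hw : Encodes F w)
    {f : ℕ × ℕ → ℕ} (hF : Filling01 F f) (hf : AtMostOnePerRowCol f) :
    fillingOf F (boundaryLabels w f) = f := by
  funext ⟨i, j⟩
  by_cases h : (i, j) ∈ F
  · have hij := mem_iff_lt_colLen.1 h
    have hW := F.lt_rowLen_zero_of_lt_colLen hij
    have hca := F.colLen_anti (j - 1) j (Nat.sub_le j 1)
    rw [fillingOf, if_pos h]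
    dsimp only
    rw [growInv_boundaryLabels hw hf hW (by simpa using hij.le),
      growInv_boundaryLabels hw hf (by omega) (by omega),
      growInv_boundaryLabels hw hf hW (by simpa using hij),
      growthRuleInv_grow (lowerConfigAt_of_atMostOnePerRowCol hf i j)]
    by_cases h0 : f (i, j) = 0
    · simp [h0]
    · simp [(hF _ h0).2]
  · rw [fillingOf, if_neg h]
    by_contra hne
    exact h (hF _ (Ne.symm hne)).1

/-- Growth diagram bijection: the 0-1-fillings of a Ferrers shape `F` with
boundary word `w` having at most one `1` in each row and each column are in
bijection with the oscillating tableaux of type `w`, i.e. sequences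
`(∅ = λ⁰, λ¹, …, λᵏ = ∅)` of partitions in which consecutive partitions differ by
at most one square, with `λ^{i-1} ⊆ λ^i` if `w_i = R` and `λ^{i-1} ⊇ λ^i` if
`w_i = D`. -/
theorem fillings_equiv_oscillating_tableaux (F : YoungDiagram) (k : ℕ)
    (w : Fin k → Bool) (hw : Encodes F w) :
    Nonempty (
      {f : ℕ × ℕ → ℕ // Filling01 F f ∧ AtMostOnePerRowCol f} ≃
      {lam : Fin (k + 1) → YoungDiagram //
        lam 0 = ⊥ ∧ lam (Fin.last k) = ⊥ ∧
        ∀ i : Fin k,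
          if w i then AddBoxLE (lam i.castSucc) (lam i.succ)
          else AddBoxLE (lam i.succ) (lam i.castSucc)}) :=
  ⟨{ toFun := fun f => ⟨boundaryLabels w f.1, isOscillating_boundaryLabels w f.2.2⟩
     invFun := fun lam =>
       ⟨fillingOf F lam.1, filling01_fillingOf, atMostOnePerRowCol_fillingOf hw lam.2⟩
     left_inv := fun f => Subtype.ext (fillingOf_boundaryLabels hw f.2.1 f.2.2)
     right_inv := fun lam => Subtype.ext (boundaryLabels_fillingOf hw lam.2) }⟩
end

section
/- Let F be a Ferrers shape with boundary word w = w_1...w_k in {D,R}. 0-1-fillings of F (arbitrary numbers of 1's per row/column) are in bijection with sequences (∅ = λ^0, λ^1, ..., λ^k = ∅) of partitions such that λ^i/λ^{i-1} is a horizontal strip whenever w_i = R, and λ^{i-1}/λ^i is a vertical strip whenever w_i = D. -/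
/-- `ν ⊆ μ` and the skew shape `μ/ν` is a horizontal strip (at most one box in
each column). -/
def HorizStrip (ν μ : YoungDiagram) : Prop :=
  ν ≤ μ ∧ ∀ i : ℕ, μ.rowLen (i + 1) ≤ ν.rowLen i

/-- `ν ⊆ μ` and the skew shape `μ/ν` is a vertical strip (at most one box in each
row). -/
def VertStrip (ν μ : YoungDiagram) : Prop :=
  ν ≤ μ ∧ ∀ j : ℕ, μ.colLen (j + 1) ≤ ν.colLen j

/-!
Both sides have `2 ^ |F|` elements. For the fillings this is clear. On the other side, the cells
of `F` correspond to the pairs (R, D) of the boundary word with the R first. If some R is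
immediately followed by a D, swapping the two letters removes one such pair, and the sequences of
the two words differ only in the diagram between these letters: with `a, b` its neighbours, a
`μ ⊇ a, b` with `μ/a` a horizontal and `μ/b` a vertical strip is replaced by a `ν ⊆ a, b` with
`a/ν` a vertical and `b/ν` a horizontal strip. Row by row, the admissible lengths of `μ` and of `ν`
form intervals, and the products of their sizes telescope to show that there are exactly twice as
many `μ` as `ν`. When no R precedes a D, the shape is empty and so is every diagram of the
sequence, which shrinks along the leading D's and grows along the trailing R's.
-/

namespace YoungDiagram

theorem ext_rowLen {μ ν : YoungDiagram} (h : ∀ i, μ.rowLen i = ν.rowLen i) : μ = ν := by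
  ext ⟨i, j⟩
  simp only [mem_cells, mem_iff_lt_rowLen, h]

theorem le_iff_rowLen_le {μ ν : YoungDiagram} : μ ≤ ν ↔ ∀ i, μ.rowLen i ≤ ν.rowLen i := by
  refine ⟨fun h i => ?_, fun h c hc => ?_⟩
  · by_contra! hlt
    have := h (mem_iff_lt_rowLen.mpr hlt)
    exact lt_irrefl _ (mem_iff_lt_rowLen.mp this)
  · exact mem_iff_lt_rowLen.mpr ((mem_iff_lt_rowLen.mp hc).trans_le (h c.1))

theorem rowLen_eq_zero_of_colLen_le {μ : YoungDiagram} {i : ℕ} (h : μ.colLen 0 ≤ i) :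
    μ.rowLen i = 0 := by
  by_contra hne
  have := mem_iff_lt_colLen.mp (mem_iff_lt_rowLen.mpr (Nat.pos_of_ne_zero hne))
  omega

@[simp]
theorem rowLen_bot (i : ℕ) : (⊥ : YoungDiagram).rowLen i = 0 :=
  Nat.eq_zero_of_not_pos fun h => notMem_bot _ (mem_iff_lt_rowLen.mpr h)

def ofAntitone (g : ℕ → ℕ) (hg : Antitone g) (B : ℕ) : YoungDiagram where
  cells := (Finset.range B ×ˢ Finset.range (g 0)).filter fun c => c.2 < g c.1
  isLowerSet := by
    rintro ⟨i, j⟩ ⟨i', j'⟩ ⟨hi, hj⟩ hc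
    simp only [Finset.coe_filter, Finset.mem_product, Finset.mem_range, Set.mem_ofPred_eq] at hc ⊢
    have := hg (show i' ≤ i from hi)
    have : j' ≤ j := hj
    exact ⟨⟨lt_of_le_of_lt hi hc.1.1, by omega⟩, by omega⟩

theorem mem_ofAntitone {g : ℕ → ℕ} {hg : Antitone g} {B : ℕ} (hB : g B = 0) {i j : ℕ} :
    (i, j) ∈ ofAntitone g hg B ↔ j < g i := by
  rw [← mem_cells]
  simp only [ofAntitone, Finset.mem_filter, Finset.mem_product, Finset.mem_range,
    and_iff_right_iff_imp]
  intro hj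
  refine ⟨lt_of_not_ge fun hBi => ?_, hj.trans_le (hg (Nat.zero_le i))⟩
  have := hg hBi
  omega

theorem rowLen_ofAntitone {g : ℕ → ℕ} {hg : Antitone g} {B : ℕ} (hB : g B = 0) (i : ℕ) :
    (ofAntitone g hg B).rowLen i = g i :=
  eq_of_forall_lt_iff fun j => by rw [← mem_iff_lt_rowLen, mem_ofAntitone hB]

end YoungDiagram

open YoungDiagram

theorem colLen_succ_le_iff_rowLen_le_succ {ν μ : YoungDiagram} :
    (∀ j, μ.colLen (j + 1) ≤ ν.colLen j) ↔ ∀ i, μ.rowLen i ≤ ν.rowLen i + 1 := by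
  constructor
  · intro h i
    by_contra! hlt
    have hμ : (i, ν.rowLen i + 1) ∈ μ := mem_iff_lt_rowLen.mpr (by omega)
    have hν : (i, ν.rowLen i) ∈ ν :=
      mem_iff_lt_colLen.mpr ((mem_iff_lt_colLen.mp hμ).trans_le (h _))
    exact lt_irrefl _ (mem_iff_lt_rowLen.mp hν)
  · intro h j
    refine le_of_forall_lt fun i hi => ?_
    have hj := mem_iff_lt_rowLen.mp (mem_iff_lt_colLen.mpr hi)
    exact mem_iff_lt_colLen.mp (mem_iff_lt_rowLen.mpr (by have := h i; omega))

theorem horizStrip_iff_rowLen {ν μ : YoungDiagram} :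
    HorizStrip ν μ ↔ ∀ i, ν.rowLen i ≤ μ.rowLen i ∧ μ.rowLen (i + 1) ≤ ν.rowLen i := by
  rw [HorizStrip, le_iff_rowLen_le, forall_and]

theorem vertStrip_iff_rowLen {ν μ : YoungDiagram} :
    VertStrip ν μ ↔ ∀ i, ν.rowLen i ≤ μ.rowLen i ∧ μ.rowLen i ≤ ν.rowLen i + 1 := by
  rw [VertStrip, le_iff_rowLen_le, colLen_succ_le_iff_rowLen_le_succ, forall_and]

def rowLenBoxEquiv (lo hi : ℕ → ℕ) (B : ℕ) (hstair : ∀ i, hi (i + 1) ≤ lo i)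
    (hlo : ∀ i, B ≤ i → lo i = 0) (hhi : ∀ i, B ≤ i → hi i = 0) :
    {μ : YoungDiagram // ∀ i, μ.rowLen i ∈ Finset.Icc (lo i) (hi i)} ≃
      ∀ i : Fin B, Finset.Icc (lo i) (hi i) where
  toFun μ i := ⟨μ.1.rowLen i, μ.2 i⟩
  invFun v :=
    let g i := if h : i < B then (v ⟨i, h⟩ : ℕ) else 0
    have hg_mem : ∀ i, g i ∈ Finset.Icc (lo i) (hi i) := fun i => by
      by_cases h : i < B
      · simp [g, h]
      · simp [g, h, hlo i (not_lt.mp h)]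
    have hg : Antitone g := antitone_nat_of_succ_le fun i =>
      ((Finset.mem_Icc.mp (hg_mem (i + 1))).2.trans (hstair i)).trans
        (Finset.mem_Icc.mp (hg_mem i)).1
    ⟨ofAntitone g hg B, fun i => by rw [rowLen_ofAntitone (by simp [g])]; exact hg_mem i⟩
  left_inv μ := by
    refine Subtype.ext (ext_rowLen fun i => ?_)
    rw [rowLen_ofAntitone (by simp)]
    by_cases h : i < B
    · simp [h]
    · have := (Finset.mem_Icc.mp (μ.2 i)).2
      simp [h, hhi i (not_lt.mp h)] at this ⊢
      omega
  right_inv v := by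
    funext i
    ext
    simp [rowLen_ofAntitone]

theorem card_pi_Icc (lo hi : ℕ → ℕ) (B : ℕ) :
    Fintype.card (∀ i : Fin B, Finset.Icc (lo i) (hi i)) =
      ∏ i ∈ Finset.range B, (hi i + 1 - lo i) := by
  simp [Fintype.card_pi, Fin.prod_univ_eq_prod_range (fun i => hi i + 1 - lo i)]

theorem mul_prod_range_eq_prod_range_mul {M : Type*} [CommMonoid M] (t f g : ℕ → M)
    (h : ∀ i, t i * f i = g i * t (i + 1)) (n : ℕ) :
    t 0 * ∏ i ∈ Finset.range n, f i = (∏ i ∈ Finset.range n, g i) * t n := by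
  induction n with
  | zero => simp
  | succ n ih =>
    rw [Finset.prod_range_succ, Finset.prod_range_succ, ← mul_assoc, ih, mul_assoc, h,
      mul_assoc]

theorem rowChoices_telescope {l₀ l₁ r₀ r₁ : ℕ} (hl : l₁ ≤ l₀) (hr : r₁ ≤ r₀) :
    (r₀ + 2 - max l₀ r₀) * (min l₀ (r₁ + 1) + 1 - max l₁ r₁) =
      (min l₀ r₀ + 1 - max (l₀ - 1) r₁) * (r₁ + 2 - max l₁ r₁) := by
  have h₀ : r₀ + 2 - max l₀ r₀ = 0 ∨ r₀ + 2 - max l₀ r₀ = 1 ∨ r₀ + 2 - max l₀ r₀ = 2 := by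
    omega
  have h₁ : r₁ + 2 - max l₁ r₁ = 0 ∨ r₁ + 2 - max l₁ r₁ = 1 ∨ r₁ + 2 - max l₁ r₁ = 2 := by
    omega
  -- once the two outer factors are fixed, the identity is linear
  rcases h₀ with h₀ | h₀ | h₀ <;> rcases h₁ with h₁ | h₁ | h₁ <;> rw [h₀, h₁] <;> omega

section LocalRule

variable (a b : YoungDiagram)

/-- Bounds on row `i` of a diagram `μ` with `μ/a` a horizontal and `μ/b` a vertical strip. -/
def upperRowMin (i : ℕ) : ℕ := max (a.rowLen i) (b.rowLen i)

def upperRowMax : ℕ → ℕ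
  | 0 => b.rowLen 0 + 1
  | i + 1 => min (a.rowLen i) (b.rowLen (i + 1) + 1)

/-- Bounds on row `i` of a diagram `ν` with `a/ν` a vertical and `b/ν` a horizontal strip. -/
def lowerRowMin (i : ℕ) : ℕ := max (a.rowLen i - 1) (b.rowLen (i + 1))

def lowerRowMax (i : ℕ) : ℕ := min (a.rowLen i) (b.rowLen i)

variable {a b}

theorem horizStrip_and_vertStrip_iff {μ : YoungDiagram} :
    HorizStrip a μ ∧ VertStrip b μ ↔
      ∀ i, μ.rowLen i ∈ Finset.Icc (upperRowMin a b i) (upperRowMax a b i) := by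
  rw [horizStrip_iff_rowLen, vertStrip_iff_rowLen]
  constructor
  · rintro ⟨hH, hV⟩ (_ | i)
    · have := hH 0; have := hV 0
      simp only [upperRowMin, upperRowMax, Finset.mem_Icc]; omega
    · have := hH i; have := hH (i + 1); have := hV (i + 1)
      simp only [upperRowMin, upperRowMax, Finset.mem_Icc]; omega
  · intro h
    have h' : ∀ i, max (a.rowLen i) (b.rowLen i) ≤ μ.rowLen i ∧ μ.rowLen i ≤ b.rowLen i + 1 ∧
        μ.rowLen (i + 1) ≤ a.rowLen i := fun i => by
      have := h i; have := h (i + 1)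
      rcases i with _ | i <;> simp only [upperRowMin, upperRowMax, Finset.mem_Icc] at * <;> omega
    exact ⟨fun i => by have := h' i; omega, fun i => by have := h' i; omega⟩

theorem vertStrip_and_horizStrip_iff {ν : YoungDiagram} :
    VertStrip ν a ∧ HorizStrip ν b ↔
      ∀ i, ν.rowLen i ∈ Finset.Icc (lowerRowMin a b i) (lowerRowMax a b i) := by
  rw [vertStrip_iff_rowLen, horizStrip_iff_rowLen, ← forall_and]
  refine forall_congr' fun i => ?_
  simp only [lowerRowMin, lowerRowMax, Finset.mem_Icc]
  omega

theorem prod_upperRow_eq_two_mul_prod_lowerRow {N : ℕ} (ha : a.colLen 0 ≤ N)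
    (hb : b.colLen 0 ≤ N) :
    ∏ i ∈ Finset.range (N + 1), (upperRowMax a b i + 1 - upperRowMin a b i) =
      2 * ∏ i ∈ Finset.range (N + 1), (lowerRowMax a b i + 1 - lowerRowMin a b i) := by
  -- `t i` counts the choices for row `i` of `μ` when the constraint from row `i - 1` is dropped
  let t i := b.rowLen i + 2 - max (a.rowLen i) (b.rowLen i)
  have hstep : ∀ i, t i * (upperRowMax a b (i + 1) + 1 - upperRowMin a b (i + 1)) =
      (lowerRowMax a b i + 1 - lowerRowMin a b i) * t (i + 1) := fun i =>
    rowChoices_telescope (a.rowLen_anti _ _ i.le_succ) (b.rowLen_anti _ _ i.le_succ)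
  have haN := rowLen_eq_zero_of_colLen_le ha
  have hbN := rowLen_eq_zero_of_colLen_le hb
  have htN : t N = 2 := by simp [t, haN, hbN]
  have hup₀ : upperRowMax a b 0 + 1 - upperRowMin a b 0 = t 0 := by
    simp only [upperRowMax, upperRowMin, t]
  have hlowN : lowerRowMax a b N + 1 - lowerRowMin a b N = 1 := by
    simp [lowerRowMax, lowerRowMin, haN, hbN, rowLen_eq_zero_of_colLen_le (hb.trans N.le_succ)]
  rw [Finset.prod_range_succ', Finset.prod_range_succ, hup₀, hlowN, mul_comm,
    mul_prod_range_eq_prod_range_mul t _ _ hstep, htN, mul_one, mul_comm]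

theorem nonempty_localRule_equiv (a b : YoungDiagram) :
    Nonempty ({μ // HorizStrip a μ ∧ VertStrip b μ} ≃
      Bool × {ν // VertStrip ν a ∧ HorizStrip ν b}) := by
  set N := max (a.colLen 0) (b.colLen 0)
  have ha : ∀ i, N ≤ i → a.rowLen i = 0 := fun i hi =>
    rowLen_eq_zero_of_colLen_le ((le_max_left _ _).trans hi)
  have hb : ∀ i, N ≤ i → b.rowLen i = 0 := fun i hi =>
    rowLen_eq_zero_of_colLen_le ((le_max_right _ _).trans hi)
  have eU := (Equiv.subtypeEquivRight fun μ => horizStrip_and_vertStrip_iff).trans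
    (rowLenBoxEquiv (upperRowMin a b) (upperRowMax a b) (N + 1)
      (fun i => (min_le_left _ _).trans (le_max_left _ _))
      (fun i hi => by simp [upperRowMin, ha i (by omega), hb i (by omega)])
      (fun i hi => by
        obtain ⟨i, rfl⟩ := Nat.exists_eq_add_of_lt (Nat.zero_lt_of_lt hi)
        simp [upperRowMax, ha i (by omega)]))
  have eL := (Equiv.subtypeEquivRight fun ν => vertStrip_and_horizStrip_iff).trans
    (rowLenBoxEquiv (lowerRowMin a b) (lowerRowMax a b) (N + 1)
      (fun i => (min_le_right _ _).trans (le_max_right _ _))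
      (fun i hi => by simp [lowerRowMin, ha i (by omega), hb (i + 1) (by omega)])
      (fun i hi => by simp [lowerRowMax, ha i (by omega)]))
  refine ⟨eU.trans ((Fintype.equivOfCardEq ?_).trans (Equiv.prodCongr (.refl _) eL.symm))⟩
  rw [Fintype.card_prod, Fintype.card_bool, card_pi_Icc, card_pi_Icc]
  exact prod_upperRow_eq_two_mul_prod_lowerRow (le_max_left _ _) (le_max_right _ _)

end LocalRule

section Fibers

variable {ι α β : Type*}

theorem nonempty_sigma_equiv_prod_sigma {R : Type*} {X Y : R → Type*}
    (h : ∀ r, Nonempty (X r ≃ β × Y r)) : Nonempty ((Σ r, X r) ≃ β × Σ r, Y r) :=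
  ⟨(Equiv.sigmaCongrRight fun r => (h r).some.trans (Equiv.prodComm _ _)).trans
    ((Equiv.sigmaProdDistrib Y β).symm.trans (Equiv.prodComm _ _))⟩

theorem nonempty_subtype_and_equiv {P Q : α → Prop} (T : Prop)
    (h : Nonempty ({x // P x} ≃ β × {x // Q x})) :
    Nonempty ({x // T ∧ P x} ≃ β × {x // T ∧ Q x}) := by
  by_cases hT : T
  · simpa only [hT, true_and] using h
  · simp only [hT, false_and]
    exact ⟨Equiv.equivOfIsEmpty _ _⟩

def sigmaUpdateEquiv [DecidableEq ι] (m : ι) (x₀ : α) (P : (ι → α) → Prop) :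
    {f // P f} ≃ Σ g : {g : ι → α // g m = x₀}, {x // P (Function.update g.1 m x)} where
  toFun f := ⟨⟨Function.update f.1 m x₀, by simp⟩, ⟨f.1 m, by simpa using f.2⟩⟩
  invFun p := ⟨Function.update p.1.1 m p.2.1, p.2.2⟩
  left_inv f := by ext1; simp
  right_inv p := by
    obtain ⟨⟨g, hg⟩, x, hx⟩ := p
    ext1
    · ext1; simp [← hg]
    · simp

theorem nonempty_subtype_equiv_of_update [DecidableEq ι] [Nonempty α] (m : ι)
    {P Q : (ι → α) → Prop}
    (h : ∀ g, Nonempty ({x // P (Function.update g m x)} ≃ β × {x // Q (Function.update g m x)})) :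
    Nonempty ({f // P f} ≃ β × {f // Q f}) := by
  obtain ⟨x₀⟩ := ‹Nonempty α›
  obtain ⟨e⟩ := nonempty_sigma_equiv_prod_sigma fun g : {g : ι → α // g m = x₀} => h g.1
  exact ⟨(sigmaUpdateEquiv m x₀ P).trans
    (e.trans (Equiv.prodCongr (.refl β) (sigmaUpdateEquiv m x₀ Q).symm))⟩

end Fibers

/-- A pair (R, D) with the R first corresponds to the cell of the shape in the column of the R
and the row of the D. -/
def rdPairs {k : ℕ} (w : Fin k → Bool) : Finset (Fin k × Fin k) :=
  Finset.univ.filter fun p => p.1 < p.2 ∧ w p.1 = true ∧ w p.2 = false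

theorem rdPairs_eq_empty_of_monotone {k : ℕ} {w : Fin k → Bool} (hw : Monotone w) :
    rdPairs w = ∅ := by
  refine Finset.filter_eq_empty_iff.mpr fun p _ ⟨hlt, h₁, h₂⟩ => ?_
  have := hw hlt.le
  rw [h₁, h₂] at this
  exact absurd this (by decide)

theorem exists_rd_of_not_monotone {n : ℕ} {w : Fin (n + 1) → Bool} (hw : ¬Monotone w) :
    ∃ i : Fin n, w i.castSucc = true ∧ w i.succ = false := by
  rw [Fin.monotone_iff_le_succ] at hw
  push Not at hw
  obtain ⟨i, hi⟩ := hw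
  exact ⟨i, by revert hi; cases w i.castSucc <;> cases w i.succ <;> decide⟩

theorem swap_castSucc_succ_lt_swap_iff {n : ℕ} (i : Fin n) {p q : Fin (n + 1)}
    (h : ¬(p = i.succ ∧ q = i.castSucc)) :
    Equiv.swap i.castSucc i.succ p < Equiv.swap i.castSucc i.succ q ↔
      p < q ∧ ¬(p = i.castSucc ∧ q = i.succ) := by
  simp only [Equiv.swap_apply_def, Fin.ext_iff, Fin.lt_def] at h ⊢
  split_ifs <;> simp_all <;> omega

theorem card_rdPairs_comp_swap {n : ℕ} (w : Fin (n + 1) → Bool) (i : Fin n)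
    (hR : w i.castSucc = true) (hD : w i.succ = false) :
    (rdPairs (w ∘ Equiv.swap i.castSucc i.succ)).card + 1 = (rdPairs w).card := by
  set σ := Equiv.swap i.castSucc i.succ
  have hlt : i.castSucc < i.succ := Fin.castSucc_lt_succ
  have h : rdPairs w =
      insert (i.castSucc, i.succ) ((rdPairs (w ∘ σ)).map (σ.prodCongr σ).toEmbedding) := by
    ext ⟨p, q⟩
    simp only [rdPairs, Finset.mem_insert, Finset.mem_map_equiv, Finset.mem_filter,
      Finset.mem_univ, true_and, Prod.ext_iff, Equiv.prodCongr_symm, Equiv.prodCongr_apply,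
      Prod.map_fst, Prod.map_snd, Function.comp_apply, σ, Equiv.symm_swap, Equiv.swap_apply_self]
    by_cases hpq : p = i.succ ∧ q = i.castSucc
    · obtain ⟨rfl, rfl⟩ := hpq
      simp [hD, hlt.ne']
    · rw [swap_castSucc_succ_lt_swap_iff i hpq]
      by_cases hIJ : p = i.castSucc ∧ q = i.succ
      · obtain ⟨rfl, rfl⟩ := hIJ
        simp [hR, hD, hlt]
      · tauto
  rw [h, Finset.card_insert_of_notMem, Finset.card_map]
  simp [rdPairs, σ, hR, not_lt.mpr hlt.le]

section Sequences

def DualStep (b : Bool) (μ ν : YoungDiagram) : Prop :=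
  if b then HorizStrip μ ν else VertStrip ν μ

def IsDualRSKSeq {k : ℕ} (w : Fin k → Bool) (lam : Fin (k + 1) → YoungDiagram) : Prop :=
  lam 0 = ⊥ ∧ lam (Fin.last k) = ⊥ ∧ ∀ t, DualStep (w t) (lam t.castSucc) (lam t.succ)

def IsDualRSKSeqAway {k : ℕ} (w : Fin k → Bool) (m : Fin (k + 1))
    (lam : Fin (k + 1) → YoungDiagram) : Prop :=
  lam 0 = ⊥ ∧ lam (Fin.last k) = ⊥ ∧
    ∀ t, t.castSucc ≠ m → t.succ ≠ m → DualStep (w t) (lam t.castSucc) (lam t.succ)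

theorem IsDualRSKSeq.eq_bot_of_monotone {k : ℕ} {w : Fin k → Bool} (hw : Monotone w)
    {lam : Fin (k + 1) → YoungDiagram} (h : IsDualRSKSeq w lam) (t : Fin (k + 1)) :
    lam t = ⊥ := by
  obtain ⟨h₀, hlast, hstep⟩ := h
  have down : ∀ s, w s = false → lam s.succ ≤ lam s.castSucc := fun s hs => by
    have h := hstep s
    simp only [DualStep, hs, Bool.false_eq_true, ↓reduceIte] at h
    exact h.1
  have up : ∀ s, w s = true → lam s.castSucc ≤ lam s.succ := fun s hs => by
    have h := hstep s
    simp only [DualStep, hs, ↓reduceIte] at h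
    exact h.1
  -- the diagrams shrink along the initial run of D's and grow along the final run of R's
  have before : ∀ t : Fin (k + 1), (∀ s : Fin k, s.castSucc < t → w s = false) → lam t = ⊥ := by
    intro t
    induction t using Fin.induction with
    | zero => exact fun _ => h₀
    | succ s ih =>
      intro hs
      have := ih fun s' hs' => hs s' (hs'.trans Fin.castSucc_lt_succ)
      exact le_bot_iff.mp (this ▸ down s (hs s Fin.castSucc_lt_succ))
  have after : ∀ t : Fin (k + 1), (∀ s : Fin k, t ≤ s.castSucc → w s = true) → lam t = ⊥ := by
    intro t
    induction t using Fin.reverseInduction with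
    | last => exact fun _ => hlast
    | cast s ih =>
      intro hs
      have := ih fun s' hs' => hs s' (Fin.castSucc_lt_succ.le.trans hs')
      exact le_bot_iff.mp (this ▸ up s (hs s le_rfl))
  by_cases hR : ∃ s : Fin k, s.castSucc < t ∧ w s = true
  · obtain ⟨s, hst, hs⟩ := hR
    refine after t fun s' hs' => ?_
    have := hw (Fin.castSucc_lt_castSucc_iff.mp (hst.trans_le hs')).le
    rw [hs] at this
    revert this
    cases w s' <;> decide
  · exact before t fun s hs => Bool.eq_false_iff.mpr fun h => hR ⟨s, hs, h⟩

theorem isDualRSKSeq_bot {k : ℕ} (w : Fin k → Bool) : IsDualRSKSeq w fun _ => ⊥ := by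
  refine ⟨rfl, rfl, fun t => ?_⟩
  cases w t <;> simp [DualStep, horizStrip_iff_rowLen, vertStrip_iff_rowLen]

section Swap

variable {n : ℕ} (w : Fin (n + 1) → Bool) (i : Fin n)

theorem castSucc_ne_castSucc_succ_iff {t : Fin (n + 1)} :
    t.castSucc ≠ i.castSucc.succ ↔ t ≠ i.succ := by
  rw [Fin.succ_castSucc, Ne, Fin.castSucc_inj]

theorem succ_ne_castSucc_succ_iff {t : Fin (n + 1)} : t.succ ≠ i.castSucc.succ ↔ t ≠ i.castSucc :=
  Fin.succ_inj.not

theorem isDualRSKSeq_update_iff (f : Fin (n + 2) → YoungDiagram) (x : YoungDiagram) :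
    IsDualRSKSeq w (Function.update f i.castSucc.succ x) ↔
      IsDualRSKSeqAway w i.castSucc.succ f ∧
        DualStep (w i.castSucc) (f i.castSucc.castSucc) x ∧
          DualStep (w i.succ) x (f i.succ.succ) := by
  have h₀ : (0 : Fin (n + 2)) ≠ i.castSucc.succ := (Fin.succ_ne_zero _).symm
  have hlast : Fin.last (n + 1) ≠ i.castSucc.succ := by simp [Fin.ext_iff]; omega
  have hI : i.castSucc.castSucc ≠ i.castSucc.succ := (castSucc_ne_castSucc_succ_iff i).mpr
    (Fin.castSucc_lt_succ).ne
  have hJ : i.succ.succ ≠ i.castSucc.succ := (succ_ne_castSucc_succ_iff i).mpr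
    (Fin.castSucc_lt_succ).ne'
  have hJ' : i.succ.castSucc = i.castSucc.succ := (Fin.succ_castSucc i).symm
  simp only [IsDualRSKSeq, IsDualRSKSeqAway, Function.update_of_ne h₀, Function.update_of_ne hlast]
  constructor
  · rintro ⟨h₀, hlast, hstep⟩
    refine ⟨⟨h₀, hlast, fun t h₁ h₂ => ?_⟩, ?_, ?_⟩
    · simpa only [Function.update_of_ne h₁, Function.update_of_ne h₂] using hstep t
    · simpa only [Function.update_self, Function.update_of_ne hI] using hstep i.castSucc
    · simpa only [hJ', Function.update_self, Function.update_of_ne hJ] using hstep i.succ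
  · rintro ⟨⟨h₀, hlast, hstep⟩, hIstep, hJstep⟩
    refine ⟨h₀, hlast, fun t => ?_⟩
    by_cases htI : t = i.castSucc
    · subst htI
      simpa only [Function.update_self, Function.update_of_ne hI] using hIstep
    by_cases htJ : t = i.succ
    · subst htJ
      simpa only [hJ', Function.update_self, Function.update_of_ne hJ] using hJstep
    have h₁ := (castSucc_ne_castSucc_succ_iff i).mpr htJ
    have h₂ := (succ_ne_castSucc_succ_iff i).mpr htI
    simpa only [Function.update_of_ne h₁, Function.update_of_ne h₂] using hstep t h₁ h₂

theorem isDualRSKSeqAway_comp_swap (f : Fin (n + 2) → YoungDiagram) :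
    IsDualRSKSeqAway (w ∘ Equiv.swap i.castSucc i.succ) i.castSucc.succ f ↔
      IsDualRSKSeqAway w i.castSucc.succ f := by
  refine and_congr_right fun _ => and_congr_right fun _ => forall_congr' fun t =>
    imp_congr_right fun h₁ => imp_congr_right fun h₂ => ?_
  rw [Function.comp_apply, Equiv.swap_apply_of_ne_of_ne ((succ_ne_castSucc_succ_iff i).mp h₂)
    ((castSucc_ne_castSucc_succ_iff i).mp h₁)]

end Swap

theorem nonempty_isDualRSKSeq_equiv_swap {n : ℕ} (w : Fin (n + 1) → Bool) (i : Fin n)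
    (hR : w i.castSucc = true) (hD : w i.succ = false) :
    Nonempty ({lam // IsDualRSKSeq w lam} ≃
      Bool × {lam // IsDualRSKSeq (w ∘ Equiv.swap i.castSucc i.succ) lam}) := by
  refine nonempty_subtype_equiv_of_update i.castSucc.succ fun f => ?_
  simp only [isDualRSKSeq_update_iff, isDualRSKSeqAway_comp_swap, Function.comp_apply,
    Equiv.swap_apply_left, Equiv.swap_apply_right, hR, hD, DualStep, Bool.false_eq_true,
    ↓reduceIte]
  exact nonempty_subtype_and_equiv _ (nonempty_localRule_equiv _ _)

theorem nonempty_isDualRSKSeq_equiv {k : ℕ} (w : Fin k → Bool) :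
    Nonempty ({lam // IsDualRSKSeq w lam} ≃ (Fin (rdPairs w).card → Bool)) := by
  induction hN : (rdPairs w).card using Nat.strong_induction_on generalizing k with
  | _ N ih =>
    subst hN
    by_cases hw : Monotone w
    · rw [rdPairs_eq_empty_of_monotone hw, Finset.card_empty]
      have : Subsingleton {lam // IsDualRSKSeq w lam} := ⟨fun a b => Subtype.ext <| funext fun t =>
        (a.2.eq_bot_of_monotone hw t).trans (b.2.eq_bot_of_monotone hw t).symm⟩
      exact ⟨equivOfSubsingletonOfSubsingleton (fun _ => finZeroElim)
        (fun _ => ⟨_, isDualRSKSeq_bot w⟩)⟩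
    obtain ⟨n, rfl⟩ : ∃ n, k = n + 1 :=
      Nat.exists_eq_succ_of_ne_zero fun hk => hw (by subst hk; exact Subsingleton.monotone w)
    obtain ⟨i, hR, hD⟩ := exists_rd_of_not_monotone hw
    have hcard := card_rdPairs_comp_swap w i hR hD
    obtain ⟨e⟩ := nonempty_isDualRSKSeq_equiv_swap w i hR hD
    obtain ⟨e'⟩ := ih _ (by omega) (w ∘ Equiv.swap i.castSucc i.succ) rfl
    rw [← hcard]
    exact ⟨e.trans ((Equiv.prodCongr (.refl Bool) e').trans (Fin.consEquiv fun _ => Bool))⟩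

end Sequences

theorem card_cells_eq_sum_colLen (F : YoungDiagram) :
    F.cells.card = ∑ j ∈ Finset.range (F.rowLen 0), F.colLen j := by
  have hcells : F.cells = (Finset.range (F.rowLen 0)).biUnion F.col := by
    ext ⟨i, j⟩
    simp only [mem_cells, Finset.mem_biUnion, Finset.mem_range, mem_col_iff]
    refine ⟨fun h => ⟨j, mem_iff_lt_rowLen.mp (F.up_left_mem (Nat.zero_le i) le_rfl h), h, rfl⟩,
      fun ⟨_, _, h, _⟩ => h⟩
  rw [hcells, Finset.card_biUnion]
  · exact Finset.sum_congr rfl fun j _ => (F.colLen_eq_card).symm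
  · intro j _ j' _ hne
    exact Finset.disjoint_left.mpr fun c hc hc' =>
      hne ((mem_col_iff.mp hc).2.symm.trans (mem_col_iff.mp hc').2)

theorem card_rdPairs_eq_sum {k : ℕ} (w : Fin k → Bool) :
    (rdPairs w).card = ∑ i ∈ Finset.univ.filter (fun i => w i = true),
      (Finset.univ.filter fun j => i < j ∧ w j = false).card := by
  rw [rdPairs, Finset.card_filter, Fintype.sum_prod_type, Finset.sum_filter]
  refine Finset.sum_congr rfl fun i _ => ?_
  by_cases hi : w i = true <;> simp [hi]

theorem Finset.sum_card_filter_le_sub_one {α M : Type*} [LinearOrder α] [AddCommMonoid M]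
    (s : Finset α) (f : ℕ → M) :
    ∑ i ∈ s, f ((s.filter (· ≤ i)).card - 1) = ∑ x ∈ Finset.range s.card, f x := by
  induction s using Finset.induction_on_max with
  | empty => simp
  | insert a s ha ih =>
    have hnot : a ∉ s := fun h => lt_irrefl a (ha a h)
    rw [Finset.sum_insert hnot, Finset.card_insert_of_notMem hnot, Finset.sum_range_succ, ← ih,
      add_comm]
    congr 1
    · refine Finset.sum_congr rfl fun i hi => ?_
      rw [Finset.filter_insert, if_neg (not_le.mpr (ha i hi))]
    · rw [Finset.filter_true_of_mem fun x hx => ?_, Finset.card_insert_of_notMem hnot,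
        Nat.add_sub_cancel]
      rcases Finset.mem_insert.mp hx with rfl | hx
      exacts [le_rfl, (ha x hx).le]

theorem card_cells_eq_card_rdPairs {F : YoungDiagram} {k : ℕ} {w : Fin k → Bool}
    (hw : Encodes F w) : F.cells.card = (rdPairs w).card := by
  obtain ⟨hR, -, hcol⟩ := hw
  rw [card_cells_eq_sum_colLen, ← hR, ← Finset.sum_card_filter_le_sub_one, card_rdPairs_eq_sum]
  refine Finset.sum_congr rfl fun i hi => ?_
  rw [Finset.filter_filter, ← hcol i (Finset.mem_filter.mp hi).2]
  simp only [and_comm]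

def zeroOneFunEquiv {α : Type*} [DecidableEq α] (s : Finset α) :
    {f : α → ℕ // ∀ c, f c ≠ 0 → c ∈ s ∧ f c = 1} ≃ (s → Bool) where
  toFun f c := f.1 c = 1
  invFun g := ⟨fun c => if h : c ∈ s then if g ⟨c, h⟩ then 1 else 0 else 0, fun c hc => by
    dsimp only at hc ⊢
    split_ifs at hc ⊢ <;> simp_all⟩
  left_inv f := by
    ext c
    have := f.2 c
    by_cases h : c ∈ s <;> by_cases h1 : f.1 c = 1 <;> simp_all
  right_inv g := by
    ext c
    cases h : g c <;> simp [h]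

/-- Dual RSK growth-diagram correspondence on Ferrers shapes: 0-1-fillings of a
Ferrers shape `F` with boundary word `w` (arbitrarily many `1`'s per row and
column) are in bijection with sequences `(∅ = λ⁰, λ¹, …, λᵏ = ∅)` of partitions
such that `λ^i/λ^{i-1}` is a horizontal strip whenever `w_i = R` and
`λ^{i-1}/λ^i` is a vertical strip whenever `w_i = D`. -/
theorem zeroOneFillings_equiv_dualRSK_sequences (F : YoungDiagram) (k : ℕ)
    (w : Fin k → Bool) (hw : Encodes F w) :
    Nonempty (
      {f : ℕ × ℕ → ℕ // ∀ c, f c ≠ 0 → c ∈ F ∧ f c = 1} ≃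
      {lam : Fin (k + 1) → YoungDiagram //
        lam 0 = ⊥ ∧ lam (Fin.last k) = ⊥ ∧
        ∀ i : Fin k,
          if w i then HorizStrip (lam i.castSucc) (lam i.succ)
          else VertStrip (lam i.succ) (lam i.castSucc)}) := by
  obtain ⟨eSeq⟩ := nonempty_isDualRSKSeq_equiv w
  have eCells := F.cells.equivFin.trans (finCongr (card_cells_eq_card_rdPairs hw))
  exact ⟨(zeroOneFunEquiv F.cells).trans ((Equiv.arrowCongr eCells (.refl Bool)).trans eSeq.symm)⟩
end

section
/- If a 0-1-filling of the staircase shape Δ_n encodes a set partition P of {1,...,n} (a 1 in column i, row j for each pair (i,j) in the standard representation of P), then the k-crossings of P correspond exactly to SE-chains of length k in the filling, and the k-nestings of P correspond exactly to NE-chains of length k in the filling; in particular cross(P) equals the length of the longest SE-chain and nest(P) equals the length of the longest NE-chain. -/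
/-- `i` and `j` lie in the same block of the set partition `P`. -/
def SameBlock {n : ℕ} (P : Finpartition (Finset.univ : Finset (Fin n)))
    (i j : Fin n) : Prop :=
  ∃ b ∈ P.parts, i ∈ b ∧ j ∈ b

/-- `(i,j)` belongs to the standard representation of `P`: `i < j`, they lie in the
same block, and `j` is the smallest element of that block larger than `i`. -/
def StdRep {n : ℕ} (P : Finpartition (Finset.univ : Finset (Fin n)))
    (i j : Fin n) : Prop :=
  i < j ∧ SameBlock P i j ∧ ∀ l : Fin n, i < l → l < j → ¬ SameBlock P i l

/-- `P` has a `k`-crossing: pairs `(i_1,j_1),…,(i_k,j_k)` of the standard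
representation with `i_1 < ⋯ < i_k < j_1 < ⋯ < j_k`. -/
def HasCrossing {n : ℕ} (P : Finpartition (Finset.univ : Finset (Fin n)))
    (k : ℕ) : Prop :=
  ∃ f g : Fin k → Fin n, StrictMono f ∧ StrictMono g ∧
    (∀ a, StdRep P (f a) (g a)) ∧ ∀ a b, f a < g b

/-- `P` has a `k`-nesting: pairs `(i_1,j_1),…,(i_k,j_k)` of the standard
representation with `i_1 < ⋯ < i_k < j_k < ⋯ < j_1`. -/
def HasNesting {n : ℕ} (P : Finpartition (Finset.univ : Finset (Fin n)))
    (k : ℕ) : Prop :=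
  ∃ f g : Fin k → Fin n, StrictMono f ∧ StrictAnti g ∧
    (∀ a, StdRep P (f a) (g a)) ∧ ∀ a b, f a < g b

/-- `cross P = s`: `s` is the maximal `k` such that `P` has a `k`-crossing. -/
def CrossEq {n : ℕ} (P : Finpartition (Finset.univ : Finset (Fin n)))
    (s : ℕ) : Prop :=
  HasCrossing P s ∧ ∀ k, HasCrossing P k → k ≤ s

/-- `nest P = t`: `t` is the maximal `k` such that `P` has a `k`-nesting. -/
def NestEq {n : ℕ} (P : Finpartition (Finset.univ : Finset (Fin n)))
    (t : ℕ) : Prop :=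
  HasNesting P t ∧ ∀ k, HasNesting P k → k ≤ t

/-- A finite set `C` of cells (column, row) is an NE-chain: any two distinct cells
are comparable with both coordinates strictly increasing. -/
def NEChain (C : Finset (ℕ × ℕ)) : Prop :=
  ∀ p ∈ C, ∀ q ∈ C, p ≠ q →
    (p.1 < q.1 ∧ p.2 < q.2) ∨ (q.1 < p.1 ∧ q.2 < p.2)

/-- A finite set `C` of cells is an SE-chain: any two distinct cells are comparable
with the column strictly increasing and the row strictly decreasing. -/
def SEChain (C : Finset (ℕ × ℕ)) : Prop :=
  ∀ p ∈ C, ∀ q ∈ C, p ≠ q →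
    (p.1 < q.1 ∧ q.2 < p.2) ∨ (q.1 < p.1 ∧ p.2 < q.2)

/-- The smallest rectangle containing the cells of `C` lies inside the Ferrers
shape `F`. -/
def RectIn (F : YoungDiagram) (C : Finset (ℕ × ℕ)) : Prop :=
  ∀ p ∈ C, ∀ q ∈ C, (p.1, q.2) ∈ F


lemma exists_cells (C : Finset (ℕ × ℕ))
    (hinj : Set.InjOn Prod.fst (C : Set (ℕ × ℕ))) :
    ∃ cell : Fin C.card → ℕ × ℕ, (∀ a, cell a ∈ C) ∧
      ∀ a b : Fin C.card, a < b → (cell a).1 < (cell b).1 := by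
  have hDc : (C.image Prod.fst).card = C.card := Finset.card_image_of_injOn hinj
  let e := (C.image Prod.fst).orderIsoOfFin hDc
  have hmem : ∀ a : Fin C.card, ∃ p, p ∈ C ∧ p.1 = ((e a : ℕ)) := by
    intro a
    obtain ⟨p, hp, hpe⟩ := Finset.mem_image.mp (e a).2
    exact ⟨p, hp, hpe⟩
  choose cell hc1 hc2 using hmem
  refine ⟨cell, hc1, fun a b hab => ?_⟩
  rw [hc2 a, hc2 b]
  exact_mod_cast e.strictMono hab

section convert

variable {n : ℕ} {P : Finpartition (Finset.univ : Finset (Fin n))}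
  {Delta : YoungDiagram} (hD : ∀ x y : ℕ, (x, y) ∈ Delta ↔ x + y + 2 ≤ n)
  {f : ℕ × ℕ → ℕ}
  (hf : ∀ x y : ℕ, f (x, y) ≠ 0 ↔
      ∃ i j : Fin n, StdRep P i j ∧ x = (i : ℕ) ∧ y + (j : ℕ) + 1 = n)

include hD hf in
lemma crossing_to_chain {k : ℕ} (h : HasCrossing P k) :
    ∃ C : Finset (ℕ × ℕ), SEChain C ∧ RectIn Delta C ∧
      (∀ c ∈ C, f c ≠ 0) ∧ C.card = k := by
  obtain ⟨F, G, hF, hG, hstd, hlt⟩ := h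
  refine ⟨(Finset.univ : Finset (Fin k)).image
    (fun a => ((F a : ℕ), n - 1 - (G a : ℕ))), ?_, ?_, ?_, ?_⟩
  · intro p hp q hq hne
    obtain ⟨a, _, rfl⟩ := Finset.mem_image.mp hp
    obtain ⟨b, _, rfl⟩ := Finset.mem_image.mp hq
    have hab : a ≠ b := fun h => hne (by rw [h])
    rcases lt_or_gt_of_ne hab with hab | hab
    · left
      have h1 : (F a : ℕ) < (F b : ℕ) := hF hab
      have h2 : (G a : ℕ) < (G b : ℕ) := hG hab
      have h3 : (G b : ℕ) < n := (G b).is_lt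
      exact ⟨h1, by simp only; omega⟩
    · right
      have h1 : (F b : ℕ) < (F a : ℕ) := hF hab
      have h2 : (G b : ℕ) < (G a : ℕ) := hG hab
      have h3 : (G a : ℕ) < n := (G a).is_lt
      exact ⟨h1, by simp only; omega⟩
  · intro p hp q hq
    obtain ⟨a, _, rfl⟩ := Finset.mem_image.mp hp
    obtain ⟨b, _, rfl⟩ := Finset.mem_image.mp hq
    rw [hD]
    have h1 : (F a : ℕ) < (G b : ℕ) := hlt a b
    have h3 : (G b : ℕ) < n := (G b).is_lt
    simp only
    omega
  · intro c hc
    obtain ⟨a, _, rfl⟩ := Finset.mem_image.mp hc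
    rw [hf]
    exact ⟨F a, G a, hstd a, rfl, by have := (G a).is_lt; omega⟩
  · rw [Finset.card_image_of_injOn, Finset.card_univ, Fintype.card_fin]
    intro a _ b _ hab
    have : (F a : ℕ) = (F b : ℕ) := congrArg Prod.fst hab
    exact hF.injective (Fin.val_injective this)

include hD hf in
lemma chain_to_crossing (C : Finset (ℕ × ℕ)) (hC : SEChain C)
    (hR : RectIn Delta C) (hnz : ∀ c ∈ C, f c ≠ 0) :
    HasCrossing P C.card := by
  have hinj : Set.InjOn Prod.fst (C : Set (ℕ × ℕ)) := by
    intro p hp q hq h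
    by_contra hne
    rcases hC p hp q hq hne with ⟨h1, _⟩ | ⟨h1, _⟩ <;> omega
  obtain ⟨cell, hmem, hmono⟩ := exists_cells C hinj
  have hne0 : ∀ a, f ((cell a).1, (cell a).2) ≠ 0 := fun a => hnz _ (hmem a)
  choose i j hstd hx hy using fun a => (hf _ _).mp (hne0 a)
  have hcellne : ∀ a b : Fin C.card, a < b → cell a ≠ cell b := by
    intro a b hab h
    have := hmono a b hab
    rw [h] at this; omega
  have hsnd : ∀ a b : Fin C.card, a < b → (cell b).2 < (cell a).2 := by
    intro a b hab
    rcases hC _ (hmem a) _ (hmem b) (hcellne a b hab) with ⟨_, h2⟩ | ⟨h1, _⟩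
    · exact h2
    · exact absurd (hmono a b hab) (by omega)
  refine ⟨i, j, ?_, ?_, hstd, ?_⟩
  · intro a b hab
    have h1 := hmono a b hab
    have h2 := hx a; have h3 := hx b
    rw [Fin.lt_def]
    omega
  · intro a b hab
    have h1 := hsnd a b hab
    have h2 := hy a; have h3 := hy b
    rw [Fin.lt_def]
    omega
  · intro a b
    have h1 := hR _ (hmem a) _ (hmem b)
    rw [hD] at h1
    have h2 := hy b; have h3 := hx a
    rw [Fin.lt_def]
    omega

include hf in
lemma nesting_to_chain {k : ℕ} (h : HasNesting P k) :
    ∃ C : Finset (ℕ × ℕ), NEChain C ∧ (∀ c ∈ C, f c ≠ 0) ∧ C.card = k := by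
  obtain ⟨F, G, hF, hG, hstd, hlt⟩ := h
  refine ⟨(Finset.univ : Finset (Fin k)).image
    (fun a => ((F a : ℕ), n - 1 - (G a : ℕ))), ?_, ?_, ?_⟩
  · intro p hp q hq hne
    obtain ⟨a, _, rfl⟩ := Finset.mem_image.mp hp
    obtain ⟨b, _, rfl⟩ := Finset.mem_image.mp hq
    have hab : a ≠ b := fun h => hne (by rw [h])
    rcases lt_or_gt_of_ne hab with hab | hab
    · left
      have h1 : (F a : ℕ) < (F b : ℕ) := hF hab
      have h2 : (G b : ℕ) < (G a : ℕ) := hG hab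
      have h3 : (G a : ℕ) < n := (G a).is_lt
      exact ⟨h1, by simp only; omega⟩
    · right
      have h1 : (F b : ℕ) < (F a : ℕ) := hF hab
      have h2 : (G a : ℕ) < (G b : ℕ) := hG hab
      have h3 : (G b : ℕ) < n := (G b).is_lt
      exact ⟨h1, by simp only; omega⟩
  · intro c hc
    obtain ⟨a, _, rfl⟩ := Finset.mem_image.mp hc
    rw [hf]
    exact ⟨F a, G a, hstd a, rfl, by have := (G a).is_lt; omega⟩
  · rw [Finset.card_image_of_injOn, Finset.card_univ, Fintype.card_fin]
    intro a _ b _ hab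
    have : (F a : ℕ) = (F b : ℕ) := congrArg Prod.fst hab
    exact hF.injective (Fin.val_injective this)

include hf in
lemma chain_to_nesting (C : Finset (ℕ × ℕ)) (hC : NEChain C)
    (hnz : ∀ c ∈ C, f c ≠ 0) :
    HasNesting P C.card := by
  have hinj : Set.InjOn Prod.fst (C : Set (ℕ × ℕ)) := by
    intro p hp q hq h
    by_contra hne
    rcases hC p hp q hq hne with ⟨h1, _⟩ | ⟨h1, _⟩ <;> omega
  obtain ⟨cell, hmem, hmono⟩ := exists_cells C hinj
  have hne0 : ∀ a, f ((cell a).1, (cell a).2) ≠ 0 := fun a => hnz _ (hmem a)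
  choose i j hstd hx hy using fun a => (hf _ _).mp (hne0 a)
  have hcellne : ∀ a b : Fin C.card, a < b → cell a ≠ cell b := by
    intro a b hab h
    have := hmono a b hab
    rw [h] at this; omega
  have hsnd : ∀ a b : Fin C.card, a < b → (cell a).2 < (cell b).2 := by
    intro a b hab
    rcases hC _ (hmem a) _ (hmem b) (hcellne a b hab) with ⟨_, h2⟩ | ⟨h1, _⟩
    · exact h2
    · exact absurd (hmono a b hab) (by omega)
  have hFmono : StrictMono i := by
    intro a b hab
    have h1 := hmono a b hab
    have h2 := hx a; have h3 := hx b
    rw [Fin.lt_def]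
    omega
  have hGanti : StrictAnti j := by
    intro a b hab
    have h1 := hsnd a b hab
    have h2 := hy a; have h3 := hy b
    rw [Fin.lt_def]
    omega
  refine ⟨i, j, hFmono, hGanti, hstd, ?_⟩
  intro a b
  calc i a ≤ i (max a b) := hFmono.monotone (le_max_left a b)
    _ < j (max a b) := (hstd (max a b)).1
    _ ≤ j b := hGanti.antitone (le_max_right a b)

end convert

/-- If `Delta` is the staircase shape `Δ_n` (the cell in column `x` and at height
`y` is present iff `x + y + 2 ≤ n`; elements of `{1,…,n}` are `0`-indexed, column
`x = i` and height `y = n - 1 - j` encode the pair `(i,j)`) and the 0-1-filling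
`f` of `Δ_n` encodes the standard representation of the set partition `P`, then
the `k`-crossings of `P` correspond exactly to SE-chains of length `k` (with
bounding rectangle inside `Δ_n`), and the `k`-nestings of `P` correspond exactly
to NE-chains of length `k`; in particular `cross P` equals the length of the
longest such SE-chain and `nest P` equals the length of the longest NE-chain. -/
theorem staircase_filling_crossings_nestings (n : ℕ)
    (P : Finpartition (Finset.univ : Finset (Fin n)))
    (Delta : YoungDiagram) (hD : ∀ x y : ℕ, (x, y) ∈ Delta ↔ x + y + 2 ≤ n)
    (f : ℕ × ℕ → ℕ)
    (hf : ∀ x y : ℕ, f (x, y) ≠ 0 ↔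
      ∃ i j : Fin n, StdRep P i j ∧ x = (i : ℕ) ∧ y + (j : ℕ) + 1 = n) :
    (∀ k : ℕ,
      (HasCrossing P k ↔ ∃ C : Finset (ℕ × ℕ), SEChain C ∧ RectIn Delta C ∧
        (∀ c ∈ C, f c ≠ 0) ∧ C.card = k) ∧
      (HasNesting P k ↔ ∃ C : Finset (ℕ × ℕ), NEChain C ∧
        (∀ c ∈ C, f c ≠ 0) ∧ C.card = k)) ∧
    (∀ s : ℕ,
      (CrossEq P s ↔
        ((∃ C : Finset (ℕ × ℕ), SEChain C ∧ RectIn Delta C ∧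
            (∀ c ∈ C, f c ≠ 0) ∧ C.card = s) ∧
          ∀ C : Finset (ℕ × ℕ), SEChain C → RectIn Delta C →
            (∀ c ∈ C, f c ≠ 0) → C.card ≤ s)) ∧
      (NestEq P s ↔
        ((∃ C : Finset (ℕ × ℕ), NEChain C ∧ (∀ c ∈ C, f c ≠ 0) ∧ C.card = s) ∧
          ∀ C : Finset (ℕ × ℕ), NEChain C → (∀ c ∈ C, f c ≠ 0) → C.card ≤ s))) := by
  have part1 : ∀ k : ℕ,
      (HasCrossing P k ↔ ∃ C : Finset (ℕ × ℕ), SEChain C ∧ RectIn Delta C ∧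
        (∀ c ∈ C, f c ≠ 0) ∧ C.card = k) ∧
      (HasNesting P k ↔ ∃ C : Finset (ℕ × ℕ), NEChain C ∧
        (∀ c ∈ C, f c ≠ 0) ∧ C.card = k) := by
    intro k
    constructor
    · constructor
      · exact crossing_to_chain hD hf
      · rintro ⟨C, hC, hR, hnz, rfl⟩
        exact chain_to_crossing hD hf C hC hR hnz
    · constructor
      · exact nesting_to_chain hf
      · rintro ⟨C, hC, hnz, rfl⟩
        exact chain_to_nesting hf C hC hnz
  refine ⟨part1, fun s => ⟨⟨?_, ?_⟩, ⟨?_, ?_⟩⟩⟩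
  · rintro ⟨h1, h2⟩
    exact ⟨((part1 s).1).mp h1, fun C hc hr hnz =>
      h2 _ (((part1 C.card).1).mpr ⟨C, hc, hr, hnz, rfl⟩)⟩
  · rintro ⟨h1, h2⟩
    refine ⟨((part1 s).1).mpr h1, fun k hk => ?_⟩
    obtain ⟨C, hc, hr, hnz, hcard⟩ := ((part1 k).1).mp hk
    exact hcard ▸ h2 C hc hr hnz
  · rintro ⟨h1, h2⟩
    exact ⟨((part1 s).2).mp h1, fun C hc hnz =>
      h2 _ (((part1 C.card).2).mpr ⟨C, hc, hnz, rfl⟩)⟩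
  · rintro ⟨h1, h2⟩
    refine ⟨((part1 s).2).mpr h1, fun k hk => ?_⟩
    obtain ⟨C, hc, hnz, hcard⟩ := ((part1 k).2).mp hk
    exact hcard ▸ h2 C hc hnz
end
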